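/- arXiv:1901.03406 — 8 statements merged into one kernel-verified Lean document; each statement's English description precedes it below -/
import Mathlib

section
/- Let G be an infinite discrete group and let X be a minimal G-flow. Then the following are equivalent: (i) for every finite D ⊆ G there is a D-separated S ⊆ G such that S·x is dense in X for every x ∈ X; (ii) X has the separated covering property; (iii) X is disjoint from the Bernoulli flow 2^G. -/
open Pointwise

section Defs

variable (G : Type*) [Group G]

/-- The right-shift of `G` on `G → A`: `(g • z) h = z (h * g)`. -/
instance (priority := high) shiftSMul (A : Type*) : SMul G (G → A) :=
  ⟨fun g z h => z (h * g)⟩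

/-- The right-shift action of `G` on `G → A` is a `G`-action (the Bernoulli flow when
`A = Bool`). -/
instance shiftMulAction (A : Type*) : MulAction G (G → A) where
  one_smul z := funext fun h => by show z (h * 1) = z h; rw [mul_one]
  mul_smul g₁ g₂ z := funext fun h => by
    show z (h * (g₁ * g₂)) = z (h * g₁ * g₂)
    rw [mul_assoc]

/-- `S ⊆ G` is `D`-separated if `Dg ∩ Dh = ∅` for all distinct `g, h ∈ S`. -/
def DSeparated (D S : Set G) : Prop :=
  ∀ g ∈ S, ∀ h ∈ S, g ≠ h → Disjoint (D * ({g} : Set G)) (D * ({h} : Set G))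

/-- The separated covering property for a `G`-flow `X`: for every finite `D ⊆ G`
and every nonempty open `U ⊆ X` there is a `D`-separated `S ⊆ G` with `S⁻¹U = X`. -/
def SCP (X : Type*) [TopologicalSpace X] [MulAction G X] : Prop :=
  ∀ D : Set G, D.Finite → ∀ U : Set X, IsOpen U → U.Nonempty →
    ∃ S : Set G, DSeparated G D S ∧ ∀ x : X, ∃ s ∈ S, s • x ∈ U

/-- A `G`-flow is minimal if every orbit is dense. -/
def IsMinimalFlow (X : Type*) [TopologicalSpace X] [MulAction G X] : Prop :=
  ∀ x : X, Dense (MulAction.orbit G x)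

/-- Two `G`-flows `X` and `Y` are disjoint if the only closed `G`-invariant subset of
`X × Y` projecting onto both factors is `X × Y` itself. -/
def FlowsDisjoint (X Y : Type*) [TopologicalSpace X] [TopologicalSpace Y]
    [MulAction G X] [MulAction G Y] : Prop :=
  ∀ J : Set (X × Y), IsClosed J → (∀ (g : G), ∀ p ∈ J, g • p ∈ J) →
    Prod.fst '' J = Set.univ → Prod.snd '' J = Set.univ → J = Set.univ

end Defs

/-!
(i) ⇒ (ii) is immediate. For (ii) ⇒ (i), compactness makes the covering sets in (ii) finite.
Well-ordering the finite sets `T ⊆ G` in order type `#G`, a transfinite recursion translates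
each of them on the right by some `g_T` so that the blocks `D T g_T` are pairwise disjoint; then
the union of the `T g_T` over `D`-separated `T` is `D`-separated, and `t g_T x ∈ V` whenever `T`
covers relative to `V`.

For (ii) ⇒ (iii), let `J` be closed, invariant, with full projections, and take a basic
neighbourhood `U × {z | z = z₀ on I}`. An `I`-separated `S` with `S⁻¹U = X` lets one choose `w`
repeating `z₀|I` on every block `I s`; if `(x, w) ∈ J` and `s x ∈ U`, then `s • (x, w)` lies
in the neighbourhood.

For (iii) ⇒ (ii), call `k` an isolated one of `z ∈ 2^G` if `z k = 1` and `z = 0` on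
`(D⁻¹D \ {1}) k`. The isolated ones of any `z` form a `D`-separated set, so if no
`D`-separated set `S` satisfies `S⁻¹U = X`, the pairs `(x, z)` with `k x ∉ U` for every
isolated one `k` of `z` form a proper closed invariant subset with full projections.
-/

open Cardinal Function Set

universe u

theorem exists_forall_notMem_of_mk_lt {α κ : Type u} [Infinite α] (hκ : #κ < #α)
    (K : κ → Set α) (hK : ∀ i, (K i).Finite) : ∃ a, ∀ i, a ∉ K i := by
  suffices #(⋃ i, K i) < #α by
    obtain ⟨a, ha⟩ :=
      (ne_univ_iff_exists_notMem (⋃ i, K i)).1 fun h => this.ne (by rw [h, mk_univ])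
    exact ⟨a, by simpa using ha⟩
  cases finite_or_infinite κ
  · exact (finite_iUnion hK).lt_aleph0.trans_le (aleph0_le_mk α)
  · calc #(⋃ i, K i) ≤ #κ * ℵ₀ :=
          (mk_iUnion_le K).trans (by gcongr; exact ciSup_le fun i => (hK i).lt_aleph0.le)
      _ = #κ := mul_aleph0_eq (aleph0_le_mk κ)
      _ < #α := hκ

section Group

variable {G : Type u} [Group G]

theorem exists_pairwise_disjoint_mul_singleton [Infinite G] {ι : Type u} (hι : #ι ≤ #G)
    (A : ι → Set G) (hA : ∀ i, (A i).Finite) :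
    ∃ g : ι → G, Pairwise (Disjoint on fun i => A i * {g i}) := by
  obtain ⟨_, _, hord⟩ := exists_ord_eq_type_lt ι
  have step (i : ι) (prev : ∀ j < i, G) :
      ∃ g : G, ∀ j (hj : j < i), Disjoint (A j * {prev j hj}) (A i * {g}) := by
    obtain ⟨g, hg⟩ := exists_forall_notMem_of_mk_lt ((mk_Iio_lt i hord).trans_le hι)
      (fun j => (A i)⁻¹ * (A j * {prev j j.2}))
      (fun j => (hA i).inv.mul ((hA j).mul (finite_singleton _)))
    refine ⟨g, fun j hj => ?_⟩
    rw [Set.mul_singleton, Set.mul_singleton, disjoint_left]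
    rintro _ ⟨b, hb, rfl⟩ ⟨a, ha, hab : a * g = b * prev j hj⟩
    have hbad := mul_mem_mul (inv_mem_inv.2 ha) (mul_mem_mul hb (mem_singleton (prev j hj)))
    rw [← hab, inv_mul_cancel_left] at hbad
    exact hg ⟨j, hj⟩ hbad
  let g : ι → G := wellFounded_lt.fix fun i prev => (step i prev).choose
  have hg (i j : ι) (hj : j < i) : Disjoint (A j * {g j}) (A i * {g i}) := by
    have hfix : g i = (step i fun j _ => g j).choose := wellFounded_lt.fix_eq _ i
    exact hfix ▸ (step i fun j _ => g j).choose_spec j hj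
  exact ⟨g, fun i j hij => (lt_or_gt_of_ne hij).elim (hg j i) fun h => (hg i j h).symm⟩

@[simp]
theorem shiftSMul_apply {A : Type*} (g h : G) (z : G → A) : (g • z) h = z (h * g) := rfl

namespace DSeparated

variable {D S : Set G}

theorem mul_singleton (hS : DSeparated G D S) (g : G) : DSeparated G D (S * {g}) := by
  intro a ha b hb hne
  rw [Set.mul_singleton] at ha hb
  obtain ⟨s, hs, rfl⟩ := ha
  obtain ⟨s', hs', rfl⟩ := hb
  have hdisj := hS s hs s' hs' fun h => hne (by rw [h])
  have htranslate (t : G) : D * {t * g} = (· * g) '' (D * {t}) := by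
    rw [← singleton_mul_singleton, ← mul_assoc]
    exact Set.mul_singleton
  rw [htranslate, htranslate]
  exact (disjoint_image_iff (mul_left_injective g)).2 hdisj

theorem iUnion {ι : Type*} {S : ι → Set G} (hS : ∀ i, DSeparated G D (S i))
    (hdisj : Pairwise (Disjoint on fun i => D * S i)) : DSeparated G D (⋃ i, S i) := by
  intro a ha b hb hne
  obtain ⟨i, ha⟩ := mem_iUnion.1 ha
  obtain ⟨j, hb⟩ := mem_iUnion.1 hb
  obtain rfl | hij := eq_or_ne i j
  · exact hS i a ha b hb hne
  · exact (hdisj hij).mono (mul_subset_mul_left (singleton_subset_iff.2 ha))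
      (mul_subset_mul_left (singleton_subset_iff.2 hb))

theorem injOn_mul (hS : DSeparated G D S) : InjOn (fun p : G × G => p.1 * p.2) (D ×ˢ S) := by
  rintro ⟨d, s⟩ ⟨hd, hs⟩ ⟨d', s'⟩ ⟨hd', hs'⟩ (h : d * s = d' * s')
  obtain rfl : s = s' := by
    by_contra hne
    exact disjoint_left.1 (hS s hs s' hs' hne) ⟨d, hd, s, rfl, rfl⟩ ⟨d', hd', s', rfl, h.symm⟩
  rw [mul_right_cancel h]

theorem exists_fun_mul_eq {A : Type*} (hS : DSeparated G D S) (z : G → A) :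
    ∃ w : G → A, ∀ d ∈ D, ∀ s ∈ S, w (d * s) = z d :=
  ⟨fun k => z (Function.invFunOn (fun p : G × G => p.1 * p.2) (D ×ˢ S) k).1, fun d hd s hs =>
    congrArg (fun p : G × G => z p.1)
      (hS.injOn_mul.leftInvOn_invFunOn (show (d, s) ∈ D ×ˢ S from ⟨hd, hs⟩))⟩

end DSeparated

def isolatedOnes (E : Set G) (z : G → Bool) : Set G :=
  {k | z k = true ∧ ∀ e ∈ E, e ≠ 1 → z (e * k) = false}

theorem dSeparated_isolatedOnes (D : Set G) (z : G → Bool) :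
    DSeparated G D (isolatedOnes (D⁻¹ * D) z) := by
  intro k hk h hh hne
  rw [Set.mul_singleton, Set.mul_singleton, disjoint_left]
  rintro _ ⟨d, hd, rfl⟩ ⟨d', hd', hdh : d' * h = d * k⟩
  have heq : d'⁻¹ * d * k = h := by rw [mul_assoc, ← hdh, inv_mul_cancel_left]
  have hne1 : d'⁻¹ * d ≠ 1 := fun h1 => hne (by rw [← heq, h1, one_mul])
  have := hk.2 _ (mul_mem_mul (inv_mem_inv.2 hd') hd) hne1
  rw [heq, hh.1] at this
  exact Bool.noConfusion this

theorem mem_isolatedOnes_smul {E : Set G} {z : G → Bool} {g k : G} :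
    k ∈ isolatedOnes E (g • z) ↔ k * g ∈ isolatedOnes E z := by
  simp [isolatedOnes, mul_assoc]

theorem isOpen_setOf_mem_isolatedOnes {E : Set G} (hE : E.Finite) (k : G) :
    IsOpen {z : G → Bool | k ∈ isolatedOnes E z} := by
  have : {z : G → Bool | k ∈ isolatedOnes E z} =
      {z | z k = true} ∩ ⋂ e ∈ E \ {1}, {z | z (e * k) = false} := by
    ext z
    simp [isolatedOnes]
  rw [this]
  exact ((isOpen_discrete {true}).preimage (continuous_apply k)).inter <|
    hE.sdiff.isOpen_biInter fun e _ => (isOpen_discrete {false}).preimage (continuous_apply _)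

end Group

section Flow

variable {G : Type u} [Group G] {X : Type*} [TopologicalSpace X] [MulAction G X]

theorem SCP.of_forall_exists_dense
    (h : ∀ D : Set G, D.Finite → ∃ S : Set G, DSeparated G D S ∧
      ∀ x : X, Dense ((fun s => s • x) '' S)) : SCP G X := by
  intro D hD U hU hUne
  obtain ⟨S, hsep, hdense⟩ := h D hD
  refine ⟨S, hsep, fun x => ?_⟩
  obtain ⟨_, hyU, s, hs, rfl⟩ := (hdense x).inter_open_nonempty U hU hUne
  exact ⟨s, hs, hyU⟩

theorem SCP.exists_finset [ContinuousConstSMul G X] [CompactSpace X] (hscp : SCP G X)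
    {D : Set G} (hD : D.Finite) {U : Set X} (hU : IsOpen U) (hUne : U.Nonempty) :
    ∃ T : Finset G, DSeparated G D T ∧ ∀ x : X, ∃ t ∈ T, t • x ∈ U := by
  obtain ⟨S, hsep, hcov⟩ := hscp D hD U hU hUne
  obtain ⟨T, hTS, hTfin, hT⟩ := isCompact_univ.elim_finite_subcover_image (b := S)
    (c := fun s => (s • ·) ⁻¹' U) (fun s _ => hU.preimage (continuous_const_smul s))
    fun x _ => by simpa using hcov x
  refine ⟨hTfin.toFinset, fun g hg h hh => hsep g (hTS (by simpa using hg)) h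
    (hTS (by simpa using hh)), fun x => ?_⟩
  simpa using hT (mem_univ x)

theorem SCP.forall_exists_dense [ContinuousConstSMul G X] [CompactSpace X] [Infinite G]
    (hscp : SCP G X) {D : Set G} (hD : D.Finite) :
    ∃ S : Set G, DSeparated G D S ∧ ∀ x : X, Dense ((fun s => s • x) '' S) := by
  obtain ⟨g, hg⟩ := exists_pairwise_disjoint_mul_singleton (mk_finset_of_infinite G).le
    (fun T : Finset G => D * T) fun T => hD.mul T.finite_toSet
  let SepFinset := {T : Finset G // DSeparated G D T}
  refine ⟨⋃ T : SepFinset, (T : Set G) * {g T}, DSeparated.iUnion (fun T => T.2.mul_singleton _)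
    fun T T' hTT' => ?_, fun x => dense_iff_inter_open.2 fun V hV hVne => ?_⟩
  · simpa only [← mul_assoc] using hg (Subtype.val_injective.ne hTT')
  · obtain ⟨T, hTsep, hTcov⟩ := hscp.exists_finset hD hV hVne
    obtain ⟨t, ht, htV⟩ := hTcov (g T • x)
    exact ⟨(t * g T) • x, by rwa [mul_smul], _,
      mem_iUnion.2 ⟨⟨T, hTsep⟩, mul_mem_mul ht (mem_singleton _)⟩, rfl⟩

theorem SCP.flowsDisjoint_bernoulli (hscp : SCP G X) : FlowsDisjoint G X (G → Bool) := by
  intro J hJc hJinv _ hJ2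
  refine eq_univ_of_forall fun ⟨x₀, z₀⟩ => hJc.closure_subset (mem_closure_iff_nhds.2 ?_)
  intro O hO
  rw [nhds_prod_eq, Filter.mem_prod_iff] at hO
  obtain ⟨u, hu, v, hv, huv⟩ := hO
  rw [nhds_pi, Filter.mem_pi'] at hv
  obtain ⟨I, t, ht, hIt⟩ := hv
  obtain ⟨S, hsep, hcov⟩ :=
    hscp I I.finite_toSet (interior u) isOpen_interior ⟨x₀, mem_interior_iff_mem_nhds.2 hu⟩
  obtain ⟨w, hw⟩ := hsep.exists_fun_mul_eq z₀
  obtain ⟨p, hpJ, rfl⟩ : w ∈ Prod.snd '' J := hJ2 ▸ mem_univ w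
  obtain ⟨s, hs, hsu⟩ := hcov p.1
  refine ⟨s • p, huv ⟨interior_subset hsu, hIt fun i hi => ?_⟩, hJinv s p hpJ⟩
  rw [Prod.smul_snd, shiftSMul_apply, hw i hi s hs]
  exact mem_of_mem_nhds (ht i)

theorem SCP.of_flowsDisjoint_bernoulli [ContinuousConstSMul G X]
    (hdisj : FlowsDisjoint G X (G → Bool)) : SCP G X := by
  classical
  by_contra hscp
  simp only [SCP, not_forall, not_exists, not_and] at hscp
  obtain ⟨D, hD, U, hU, ⟨x₀, hx₀⟩, hbad⟩ := hscp
  let J : Set (X × (G → Bool)) := {p | ∀ k ∈ isolatedOnes (D⁻¹ * D) p.2, k • p.1 ∉ U}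
  have hJc : IsClosed J := by
    have hJcompl : Jᶜ = ⋃ k : G,
        Prod.snd ⁻¹' {z | k ∈ isolatedOnes (D⁻¹ * D) z} ∩ (fun p => k • p.1) ⁻¹' U := by
      ext p
      simp [J]
    rw [← isOpen_compl_iff, hJcompl]
    exact isOpen_iUnion fun k =>
      ((isOpen_setOf_mem_isolatedOnes (hD.inv.mul hD) k).preimage continuous_snd).inter
        (hU.preimage (continuous_fst.const_smul k))
  have hJinv (g : G) (p) (hp : p ∈ J) : g • p ∈ J := fun k hk => by
    simpa [mul_smul] using hp (k * g) (mem_isolatedOnes_smul.1 hk)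
  have hJ1 : Prod.fst '' J = Set.univ :=
    eq_univ_of_forall fun x => ⟨(x, fun _ => false), fun k hk => by simp [isolatedOnes] at hk, rfl⟩
  have hJ2 : Prod.snd '' J = Set.univ := eq_univ_of_forall fun z => by
    obtain ⟨x, hx⟩ := hbad _ (dSeparated_isolatedOnes D z)
    exact ⟨(x, z), hx, rfl⟩
  have hmem : (x₀, fun h : G => decide (h = 1)) ∈ J := hdisj J hJc hJinv hJ1 hJ2 ▸ mem_univ _
  exact hmem 1 ⟨by simp, fun e _ he => by simpa using he⟩ (by rwa [one_smul])

end Flow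

theorem SCP_equivalences_general
    (G : Type*) [Group G] [Infinite G]
    (X : Type*) [TopologicalSpace X] [CompactSpace X]
    [MulAction G X] [ContinuousConstSMul G X] :
    ((∀ D : Set G, D.Finite →
        ∃ S : Set G, DSeparated G D S ∧ ∀ x : X, Dense ((fun s => s • x) '' S)) ↔
      SCP G X) ∧
    (SCP G X ↔ FlowsDisjoint G X (G → Bool)) :=
  ⟨⟨SCP.of_forall_exists_dense, fun h _ => h.forall_exists_dense⟩,
    ⟨SCP.flowsDisjoint_bernoulli, SCP.of_flowsDisjoint_bernoulli⟩⟩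

/-- For a minimal `G`-flow `X` (with `G` infinite), the following are
equivalent: (i) for every finite `D ⊆ G` there is a `D`-separated `S ⊆ G` such that `S·x`
is dense for every `x ∈ X`; (ii) `X` has the separated covering property; (iii) `X` is
disjoint from the Bernoulli flow `2^G`. -/
theorem SCP_equivalences
    (G : Type*) [Group G] [Infinite G]
    (X : Type*) [TopologicalSpace X] [CompactSpace X] [T2Space X] [Nonempty X]
    [MulAction G X] [ContinuousConstSMul G X]
    (hXmin : IsMinimalFlow G X) :
    ((∀ D : Set G, D.Finite →
        ∃ S : Set G, DSeparated G D S ∧ ∀ x : X, Dense ((fun s => s • x) '' S)) ↔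
      SCP G X) ∧
    (SCP G X ↔ FlowsDisjoint G X (G → Bool)) :=
  SCP_equivalences_general G X
end

section
/- Let G be an infinite discrete group and let π : X → Y be a continuous surjective G-equivariant map between minimal G-flows X and Y, where Y is essentially free. If Y has the separated covering property, then X has the separated covering property. -/
open Pointwise

/-- A `G`-flow is essentially free if for every `g ≠ 1` the set of `g`-fixed points has
empty interior. -/
def EssentiallyFree (G : Type*) [Group G] (Y : Type*) [TopologicalSpace Y]
    [MulAction G Y] : Prop :=
  ∀ g : G, g ≠ 1 → interior {y : Y | g • y = y} = ∅

/-!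
Fix `D` and `U`. Finitely many translates of `closure (π '' U)` cover `Y`, so it has interior,
and essential freeness gives a point `y₀` of that interior at which `D` acts injectively, hence a
closed neighbourhood `K` of `y₀` with pairwise disjoint translates `d • K`, `d ∈ D`. The return
times `{f | f • y₀ ∈ K}` are then `D`-separated. Take a finite `F` bringing every point of `X` into
`U ∩ π⁻¹' interior K`, and a neighbourhood `V` of `y₀` from which only the return times in `F` can
reach `K`. If `T` is `(D * F)`-separated with `T⁻¹ V = Y`, the return times in `F` times `T` form
the required `D`-separated set.
-/

open Filter Topology

section Separated

variable {G : Type*} [Group G] {D S T : Set G}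

theorem dSeparated_iff :
    DSeparated G D S ↔ ∀ g ∈ S, ∀ h ∈ S, ∀ d ∈ D, ∀ d' ∈ D, d * g = d' * h → g = h := by
  simp only [DSeparated, Set.disjoint_left, Set.mem_mul, Set.mem_singleton_iff, exists_eq_left]
  constructor
  · intro hS g hg h hh d hd d' hd' hdg
    by_contra hgh
    exact hS g hg h hh hgh ⟨d, hd, rfl⟩ ⟨d', hd', hdg.symm⟩
  · rintro hS g hg h hh hgh _ ⟨d, hd, rfl⟩ ⟨d', hd', hdg⟩
    exact hgh (hS g hg h hh d hd d' hd' hdg.symm)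

theorem DSeparated.mono (hT : DSeparated G D T) (hST : S ⊆ T) : DSeparated G D S :=
  fun g hg h hh => hT g (hST hg) h (hST hh)

theorem DSeparated.mono_left {D' : Set G} (hS : DSeparated G D S) (hD : D' ⊆ D) :
    DSeparated G D' S :=
  fun g hg h hh hgh => (hS g hg h hh hgh).mono
    (Set.mul_subset_mul_right hD) (Set.mul_subset_mul_right hD)

theorem DSeparated.mul (hS : DSeparated G D S) (hT : DSeparated G (D * S) T) :
    DSeparated G D (S * T) := by
  rw [dSeparated_iff] at hS hT ⊢
  rintro _ ⟨s, hs, t, ht, rfl⟩ _ ⟨s', hs', t', ht', rfl⟩ d hd d' hd' hdst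
  have hdst' : d * s * t = d' * s' * t' := by simpa only [mul_assoc] using hdst
  obtain rfl := hT t ht t' ht' _ (Set.mul_mem_mul hd hs) _ (Set.mul_mem_mul hd' hs') hdst'
  rw [hS s hs s' hs' d hd d' hd' (mul_right_cancel hdst')]

theorem dSeparated_setOf_smul_mem {Y : Type*} [MulAction G Y] {K : Set Y}
    (hK : D.Pairwise fun d d' => Disjoint (d • K) (d' • K)) (y : Y) :
    DSeparated G D {f | f • y ∈ K} := by
  rw [dSeparated_iff]
  intro f hf f' hf' d hd d' hd' hdf
  have hdd' : d = d' := by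
    by_contra hne
    refine Set.disjoint_left.mp (hK hd hd' hne) (Set.smul_mem_smul_set hf) ?_
    rw [smul_smul, hdf, ← smul_smul]
    exact Set.smul_mem_smul_set hf'
  subst hdd'
  exact mul_left_cancel hdf

end Separated

section Flows

variable {G : Type*} [Group G] {Y : Type*} [TopologicalSpace Y] [MulAction G Y]
  [ContinuousConstSMul G Y]

theorem IsMinimalFlow.exists_finset_forall_smul_mem [CompactSpace Y] (hY : IsMinimalFlow G Y)
    {U : Set Y} (hU : IsOpen U) (hUne : U.Nonempty) : ∃ F : Finset G, ∀ y, ∃ g ∈ F, g • y ∈ U := by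
  have hcover : Set.univ ⊆ ⋃ g : G, (g • ·) ⁻¹' U := fun y _ => by
    obtain ⟨_, ⟨g, rfl⟩, hgy⟩ := (hY y).exists_mem_open hU hUne
    exact Set.mem_iUnion.mpr ⟨g, hgy⟩
  obtain ⟨F, hF⟩ := isCompact_univ.elim_finite_subcover _
    (fun g => hU.preimage (continuous_const_smul g)) hcover
  exact ⟨F, fun y => by simpa using hF (Set.mem_univ y)⟩

theorem IsMinimalFlow.nonempty_interior_closure_image {X : Type*} [TopologicalSpace X]
    [CompactSpace X] [MulAction G X] [ContinuousConstSMul G X] [BaireSpace Y]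
    (hX : IsMinimalFlow G X) {π : X → Y} (hπsurj : Function.Surjective π)
    (hπequiv : ∀ (g : G) (x : X), π (g • x) = g • π x) {U : Set X} (hU : IsOpen U)
    (hUne : U.Nonempty) : (interior (closure (π '' U))).Nonempty := by
  have : Nonempty Y := ⟨π hUne.some⟩
  obtain ⟨F, hF⟩ := hX.exists_finset_forall_smul_mem hU hUne
  have hcover : ⋃ g : F, (g : G)⁻¹ • closure (π '' U) = Set.univ := by
    refine Set.eq_univ_of_forall fun y => ?_
    obtain ⟨x, rfl⟩ := hπsurj y
    obtain ⟨g, hg, hgx⟩ := hF x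
    refine Set.mem_iUnion.mpr ⟨⟨g, hg⟩, Set.mem_inv_smul_set_iff.mpr ?_⟩
    exact subset_closure ⟨g • x, hgx, hπequiv g x⟩
  obtain ⟨g, hg⟩ := nonempty_interior_of_iUnion_of_closed
    (fun g : F => isClosed_closure.smul _) hcover
  rw [interior_smul] at hg
  exact Set.smul_set_nonempty.mp hg

theorem EssentiallyFree.exists_mem_forall_smul_ne [T2Space Y] (hY : EssentiallyFree G Y)
    {Q : Set G} (hQ : Q.Finite) (hQ1 : 1 ∉ Q) {O : Set Y} (hO : IsOpen O) (hOne : O.Nonempty) :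
    ∃ y ∈ O, ∀ c ∈ Q, c • y ≠ y := by
  have hdense : Dense (⋂ c ∈ Q, {y : Y | c • y = y}ᶜ) := by
    rw [← Set.sInter_image]
    refine (hQ.image _).dense_sInter ?_ ?_ <;> rintro _ ⟨c, hc, rfl⟩
    · exact (isClosed_eq (continuous_const_smul c) continuous_id).isOpen_compl
    · exact interior_eq_empty_iff_dense_compl.mp (hY c (ne_of_mem_of_not_mem hc hQ1))
  obtain ⟨y, hy, hyO⟩ := hdense.exists_mem_open hO hOne
  exact ⟨y, hyO, Set.mem_iInter₂.mp hy⟩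

theorem EssentiallyFree.exists_mem_injOn_smul [T2Space Y] (hY : EssentiallyFree G Y)
    {D : Set G} (hD : D.Finite) {O : Set Y} (hO : IsOpen O) (hOne : O.Nonempty) :
    ∃ y ∈ O, Set.InjOn (· • y) D := by
  obtain ⟨y, hyO, hy⟩ :=
    hY.exists_mem_forall_smul_ne (Q := (D⁻¹ * D) \ {1}) (hD.inv.mul hD).sdiff (fun h => h.2 rfl)
      hO hOne
  refine ⟨y, hyO, fun d hd d' hd' hdd' => ?_⟩
  by_contra hne
  refine hy (d'⁻¹ * d) ⟨Set.mul_mem_mul (Set.inv_mem_inv.mpr hd') hd, ?_⟩ ?_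
  · exact fun h : d'⁻¹ * d = 1 => hne (inv_mul_eq_one.mp h).symm
  · rw [mul_smul, inv_smul_eq_iff]
    exact hdd'

theorem exists_isClosed_mem_nhds_pairwise_disjoint_smul [T2Space Y] [RegularSpace Y] {D : Set G}
    (hD : D.Finite) {y : Y} (hy : Set.InjOn (· • y) D) :
    ∃ K ∈ 𝓝 y, IsClosed K ∧ D.Pairwise fun d d' => Disjoint (d • K) (d' • K) := by
  have hpair : ∀ d ∈ D, ∀ d' ∈ D, d ≠ d' →
      ∀ᶠ N in (𝓝 y).smallSets, Disjoint (d • N) (d' • N) := by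
    intro d hd d' hd' hne
    rw [eventually_smallSets' fun N N' hNN' h =>
      h.mono (Set.smul_set_mono hNN') (Set.smul_set_mono hNN')]
    obtain ⟨s, hs, t, ht, hst⟩ := Filter.disjoint_iff.mp
      (disjoint_nhds_nhds.mpr fun h => hne (hy hd hd' h))
    refine ⟨(d • ·) ⁻¹' s ∩ (d' • ·) ⁻¹' t,
      inter_mem ((continuous_const_smul d).continuousAt hs)
        ((continuous_const_smul d').continuousAt ht), ?_⟩
    exact hst.mono (Set.smul_set_subset_iff.mpr fun z hz => hz.1)
      (Set.smul_set_subset_iff.mpr fun z hz => hz.2)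
  have hall : ∀ᶠ N in (𝓝 y).smallSets, D.Pairwise fun d d' => Disjoint (d • N) (d' • N) :=
    (eventually_all_finite hD).2 fun d hd => (eventually_all_finite hD).2 fun d' hd' =>
      eventually_imp_distrib_left.2 (hpair d hd d' hd')
  obtain ⟨N, hN, hNdisj⟩ := eventually_smallSets.1 hall
  obtain ⟨K, hK, hKclosed, hKN⟩ := exists_mem_nhds_isClosed_subset hN
  exact ⟨K, hK, hKclosed, hNdisj K hKN⟩

theorem exists_isOpen_forall_smul_mem_imp_smul_mem {F : Set G} (hF : F.Finite) {K : Set Y}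
    (hK : IsClosed K) (y : Y) :
    ∃ V, IsOpen V ∧ y ∈ V ∧ ∀ v ∈ V, ∀ f ∈ F, f • v ∈ K → f • y ∈ K := by
  have hev : ∀ᶠ v in 𝓝 y, ∀ f ∈ F, f • v ∈ K → f • y ∈ K := by
    refine (eventually_all_finite hF).2 fun f _ => ?_
    by_cases hfy : f • y ∈ K
    · exact Eventually.of_forall fun _ _ => hfy
    · filter_upwards [(continuous_const_smul f).continuousAt (hK.isOpen_compl.mem_nhds hfy)]
        with v hv hvK using absurd hvK hv
  obtain ⟨V, hV, hVopen, hyV⟩ := eventually_nhds_iff.1 hev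
  exact ⟨V, hVopen, hyV, hV⟩

end Flows

theorem SCP_lifts_along_extensions_general
    (G : Type*) [Group G]
    (X : Type*) [TopologicalSpace X] [CompactSpace X]
    [MulAction G X] [ContinuousConstSMul G X]
    (Y : Type*) [TopologicalSpace Y] [CompactSpace Y] [T2Space Y]
    [MulAction G Y] [ContinuousConstSMul G Y]
    (π : X → Y) (hπcont : Continuous π) (hπsurj : Function.Surjective π)
    (hπequiv : ∀ (g : G) (x : X), π (g • x) = g • π x)
    (hXmin : IsMinimalFlow G X)
    (hYef : EssentiallyFree G Y) (hYscp : SCP G Y) :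
    SCP G X := by
  intro D hD U hU hUne
  obtain ⟨y₀, hy₀, hy₀inj⟩ := hYef.exists_mem_injOn_smul hD isOpen_interior
    (hXmin.nonempty_interior_closure_image hπsurj hπequiv hU hUne)
  obtain ⟨K, hK, hKclosed, hKdisj⟩ := exists_isClosed_mem_nhds_pairwise_disjoint_smul hD hy₀inj
  have hU₀ : (U ∩ π ⁻¹' interior K).Nonempty := by
    obtain ⟨_, hyK, x, hxU, rfl⟩ :=
      mem_closure_iff_nhds.mp (interior_subset hy₀) _ (interior_mem_nhds.mpr hK)
    exact ⟨x, hxU, hyK⟩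
  obtain ⟨F, hF⟩ :=
    hXmin.exists_finset_forall_smul_mem (hU.inter (isOpen_interior.preimage hπcont)) hU₀
  obtain ⟨V, hV, hy₀V, hVK⟩ :=
    exists_isOpen_forall_smul_mem_imp_smul_mem F.finite_toSet hKclosed y₀
  obtain ⟨T, hT, hTV⟩ := hYscp (D * F) (hD.mul F.finite_toSet) V hV ⟨y₀, hy₀V⟩
  set R := {f ∈ (F : Set G) | f • y₀ ∈ K}
  have hR : DSeparated G D R := (dSeparated_setOf_smul_mem hKdisj y₀).mono fun f hf => hf.2
  refine ⟨R * T, hR.mul (hT.mono_left (Set.mul_subset_mul_left fun f hf => hf.1)), fun x => ?_⟩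
  obtain ⟨t, ht, htx⟩ := hTV (π x)
  obtain ⟨f, hf, hfU, hfK⟩ := hF (t • x)
  rw [Set.mem_preimage, hπequiv, hπequiv] at hfK
  exact ⟨f * t, Set.mul_mem_mul ⟨hf, hVK _ htx f hf (interior_subset hfK)⟩ ht, by rwa [mul_smul]⟩

/-- Let `π : X → Y` be a continuous surjective `G`-equivariant map between
minimal `G`-flows with `Y` essentially free.  If `Y` has the separated covering property,
then so does `X`. -/
theorem SCP_lifts_along_extensions
    (G : Type*) [Group G] [Infinite G]
    (X : Type*) [TopologicalSpace X] [CompactSpace X] [T2Space X] [Nonempty X]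
    [MulAction G X] [ContinuousConstSMul G X]
    (Y : Type*) [TopologicalSpace Y] [CompactSpace Y] [T2Space Y] [Nonempty Y]
    [MulAction G Y] [ContinuousConstSMul G Y]
    (π : X → Y) (hπcont : Continuous π) (hπsurj : Function.Surjective π)
    (hπequiv : ∀ (g : G) (x : X), π (g • x) = g • π x)
    (hXmin : IsMinimalFlow G X) (hYmin : IsMinimalFlow G Y)
    (hYef : EssentiallyFree G Y) (hYscp : SCP G Y) :
    SCP G X :=
  SCP_lifts_along_extensions_general G X Y π hπcont hπsurj hπequiv hXmin hYef hYscp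
end

section
/- Let G be an infinite discrete group. If G admits some minimal, essentially free G-flow with the separated covering property, then every minimal G-flow has the separated covering property. -/
open Pointwise

open Set MulAction

section SCPAux


variable {G : Type*} [Group G] {P : Type*} [TopologicalSpace P] [MulAction G P]
  [ContinuousConstSMul G P]

private lemma smul_mem_closure_orbit' (g : G) {z p : P}
    (hp : p ∈ closure (orbit G z)) : g • p ∈ closure (orbit G z) := by
  have h1 : (fun p => g • p) '' orbit G z ⊆ orbit G z := by
    rintro _ ⟨_, ⟨g', rfl⟩, rfl⟩
    show g • g' • z ∈ orbit G z
    rw [← mul_smul]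
    exact mem_orbit z (g * g')
  have h2 : (fun p => g • p) '' closure (orbit G z) ⊆ closure (orbit G z) :=
    (image_closure_subset_closure_image (continuous_const_smul g)).trans (closure_mono h1)
  exact h2 ⟨p, hp, rfl⟩

private lemma exists_minimal_subflow' [CompactSpace P] [Nonempty P] :
    ∃ Z : Set P, Z.Nonempty ∧ IsClosed Z ∧ (∀ g : G, ∀ p ∈ Z, g • p ∈ Z) ∧
      ∀ z ∈ Z, Z ⊆ closure (orbit G z) := by
  set S : Set (Set P) := {A | A.Nonempty ∧ IsClosed A ∧ ∀ g : G, ∀ p ∈ A, g • p ∈ A} with hS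
  have hH : ∀ c ⊆ S, IsChain (· ⊆ ·) c → c.Nonempty → ∃ lb ∈ S, ∀ s ∈ c, lb ⊆ s := by
    intro c hcS hchain hcne
    have : Nonempty c := hcne.to_subtype
    have hdir : Directed (· ⊇ ·) (fun s : c => (s : Set P)) := by
      rintro ⟨a, ha⟩ ⟨b, hb⟩
      rcases eq_or_ne a b with rfl | hab
      · exact ⟨⟨a, ha⟩, Subset.rfl, Subset.rfl⟩
      · rcases hchain ha hb hab with h | h
        · exact ⟨⟨a, ha⟩, Subset.rfl, h⟩
        · exact ⟨⟨b, hb⟩, h, Subset.rfl⟩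
    have hne : (⋂ s : c, (s : Set P)).Nonempty :=
      IsCompact.nonempty_iInter_of_directed_nonempty_isCompact_isClosed _ hdir
        (fun s => (hcS s.2).1) (fun s => (hcS s.2).2.1.isCompact) (fun s => (hcS s.2).2.1)
    refine ⟨⋂₀ c, ⟨?_, ?_, ?_⟩, fun s hs => sInter_subset_of_mem hs⟩
    · rwa [sInter_eq_iInter]
    · exact isClosed_sInter fun s hs => (hcS hs).2.1
    · intro g p hp
      rw [mem_sInter] at hp ⊢
      exact fun s hs => (hcS hs).2.2 g p (hp s hs)
  obtain ⟨Z, -, hZS, hZmin⟩ := zorn_superset_nonempty S hH univ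
    ⟨univ_nonempty, isClosed_univ, fun _ _ _ => mem_univ _⟩
  refine ⟨Z, hZS.1, hZS.2.1, hZS.2.2, ?_⟩
  intro z hz
  have hKS : closure (orbit G z) ∈ S :=
    ⟨⟨z, subset_closure (mem_orbit_self z)⟩, isClosed_closure,
      fun g p hp => smul_mem_closure_orbit' g hp⟩
  have hKZ : closure (orbit G z) ⊆ Z := by
    apply hZS.2.1.closure_subset_iff.2
    rintro _ ⟨g, rfl⟩
    exact hZS.2.2 g z hz
  exact hZmin hKS hKZ

private lemma minimal_finite_cover' [CompactSpace P] {Z : Set P}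
    (hZc : IsClosed Z) (hZorb : ∀ z ∈ Z, Z ⊆ closure (orbit G z))
    {O : Set P} (hO : IsOpen O) (hne : (O ∩ Z).Nonempty) :
    ∃ F : Finset G, ∀ z ∈ Z, ∃ f ∈ F, f • z ∈ O := by
  have hcov : Z ⊆ ⋃ g : G, (fun p => g • p) ⁻¹' O := by
    intro z hz
    obtain ⟨p, hpO, hpZ⟩ := hne
    have hp : p ∈ closure (orbit G z) := hZorb z hz hpZ
    obtain ⟨q, hq1, g, rfl⟩ := mem_closure_iff.1 hp O hO hpO
    exact mem_iUnion.2 ⟨g, hq1⟩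
  obtain ⟨F, hF⟩ := hZc.isCompact.elim_finite_subcover _
    (fun g : G => hO.preimage (continuous_const_smul g)) hcov
  exact ⟨F, fun z hz => by simpa using hF hz⟩

end SCPAux

/-- If `G` admits some minimal, essentially free `G`-flow `Y` with the
separated covering property, then every minimal `G`-flow `X` has the separated covering
property. -/
theorem SCP_from_one_essentially_free_flow
    (G : Type*) [Group G] [Infinite G]
    (Y : Type*) [TopologicalSpace Y] [CompactSpace Y] [T2Space Y] [Nonempty Y]
    [MulAction G Y] [ContinuousConstSMul G Y]
    (hYmin : IsMinimalFlow G Y) (hYef : EssentiallyFree G Y) (hYscp : SCP G Y)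
    (X : Type*) [TopologicalSpace X] [CompactSpace X] [T2Space X] [Nonempty X]
    [MulAction G X] [ContinuousConstSMul G X]
    (hXmin : IsMinimalFlow G X) :
    SCP G X := by
  classical
  intro D hD U hU hUne
  -- minimal subflow of the product
  obtain ⟨Z, hZne, hZcl, hZinv, hZorb⟩ := exists_minimal_subflow' (G := G) (P := X × Y)
  -- projections are onto
  have hXproj : ∀ x : X, ∃ z ∈ Z, z.1 = x := by
    have hcl : IsClosed (Prod.fst '' Z) := (hZcl.isCompact.image continuous_fst).isClosed
    obtain ⟨z₀, hz₀⟩ := hZne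
    have horb : orbit G z₀.1 ⊆ Prod.fst '' Z := by
      rintro _ ⟨g, rfl⟩
      exact ⟨g • z₀, hZinv g z₀ hz₀, rfl⟩
    have : (univ : Set X) ⊆ Prod.fst '' Z := by
      rw [← (hXmin z₀.1).closure_eq]
      exact hcl.closure_subset_iff.2 horb
    intro x
    obtain ⟨z, hz, hz1⟩ := this (mem_univ x)
    exact ⟨z, hz, hz1⟩
  have hYproj : ∀ y : Y, ∃ z ∈ Z, z.2 = y := by
    have hcl : IsClosed (Prod.snd '' Z) := (hZcl.isCompact.image continuous_snd).isClosed
    obtain ⟨z₀, hz₀⟩ := hZne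
    have horb : orbit G z₀.2 ⊆ Prod.snd '' Z := by
      rintro _ ⟨g, rfl⟩
      exact ⟨g • z₀, hZinv g z₀ hz₀, rfl⟩
    have : (univ : Set Y) ⊆ Prod.snd '' Z := by
      rw [← (hYmin z₀.2).closure_eq]
      exact hcl.closure_subset_iff.2 horb
    intro y
    obtain ⟨z, hz, hz2⟩ := this (mem_univ y)
    exact ⟨z, hz, hz2⟩
  -- the basic open set over U and its finite returning cover
  set OU : Set (X × Y) := Prod.fst ⁻¹' U with hOUdef
  have hOUopen : IsOpen OU := hU.preimage continuous_fst
  have hOUne : (OU ∩ Z).Nonempty := by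
    obtain ⟨x, hx⟩ := hUne
    obtain ⟨z, hzZ, hz1⟩ := hXproj x
    exact ⟨z, ⟨show z.1 ∈ U by rw [hz1]; exact hx, hzZ⟩⟩
  obtain ⟨F, hF⟩ := minimal_finite_cover' hZcl hZorb hOUopen hOUne
  -- Baire: the closure of the projection of W := OU ∩ Z to Y has nonempty interior
  set C : Set Y := closure (Prod.snd '' (OU ∩ Z)) with hCdef
  have hcovC : (⋃ f : F, (fun y => (f : G) • y) ⁻¹' C) = univ := by
    apply eq_univ_of_forall
    intro y
    obtain ⟨z, hzZ, hz2⟩ := hYproj y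
    obtain ⟨f, hfF, hfz⟩ := hF z hzZ
    refine mem_iUnion.2 ⟨⟨f, hfF⟩, ?_⟩
    show (f : G) • y ∈ C
    refine subset_closure ⟨f • z, ⟨hfz, hZinv f z hzZ⟩, ?_⟩
    show (f • z).2 = f • y
    rw [Prod.smul_snd, hz2]
  have hFcne : Nonempty Y := inferInstance
  have hCint : (interior C).Nonempty := by
    obtain ⟨f, y, hy⟩ := nonempty_interior_of_iUnion_of_closed
      (fun f : F => (isClosed_closure).preimage (continuous_const_smul (f : G))) hcovC
    refine ⟨(f : G) • y, ?_⟩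
    obtain ⟨O', hO'sub, hO'open, hyO'⟩ := mem_interior.1 hy
    refine mem_interior.2 ⟨(fun y => (f : G) • y) '' O', ?_, isOpenMap_smul (f : G) O' hO'open, ⟨y, hyO', rfl⟩⟩
    rintro _ ⟨w, hw, rfl⟩
    exact hO'sub hw
  -- dense set of D-free points
  have hfreeDense : ∀ p : G × G, Dense {y : Y | p.1 ∈ D → p.2 ∈ D → p.1 ≠ p.2 → p.1 • y ≠ p.2 • y} ∧
      IsOpen {y : Y | p.1 ∈ D → p.2 ∈ D → p.1 ≠ p.2 → p.1 • y ≠ p.2 • y} := by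
    intro p
    by_cases hp : p.1 ∈ D ∧ p.2 ∈ D ∧ p.1 ≠ p.2
    · obtain ⟨h1, h2, hne⟩ := hp
      have hb : (p.1⁻¹ * p.2 : G) ≠ 1 := by
        intro h
        apply hne
        have : p.1 * (p.1⁻¹ * p.2) = p.1 * 1 := by rw [h]
        rw [← mul_assoc, mul_inv_cancel, one_mul, mul_one] at this
        exact this.symm
      have hset : {y : Y | p.1 ∈ D → p.2 ∈ D → p.1 ≠ p.2 → p.1 • y ≠ p.2 • y} =
          {y : Y | (p.1⁻¹ * p.2) • y = y}ᶜ := by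
        ext y
        simp only [mem_setOf_eq, mem_compl_iff]
        constructor
        · intro h hb2
          apply h h1 h2 hne
          rw [mul_smul] at hb2
          calc p.1 • y = p.1 • (p.1⁻¹ • p.2 • y) := by rw [hb2]
            _ = p.2 • y := by rw [smul_inv_smul]
        · intro h _ _ _ heq
          apply h
          rw [mul_smul, ← heq, inv_smul_smul]
      have hclosed : IsClosed {y : Y | (p.1⁻¹ * p.2) • y = y} :=
        isClosed_eq (continuous_const_smul _) continuous_id
      constructor
      · rw [hset]
        exact interior_eq_empty_iff_dense_compl.1 (hYef _ hb)
      · rw [hset]; exact hclosed.isOpen_compl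
    · have hset : {y : Y | p.1 ∈ D → p.2 ∈ D → p.1 ≠ p.2 → p.1 • y ≠ p.2 • y} = univ := by
        apply eq_univ_of_forall
        intro y h1 h2 hne
        exact absurd ⟨h1, h2, hne⟩ hp
      rw [hset]
      exact ⟨dense_univ, isOpen_univ⟩
  -- pick a free point y⋆ in the projection of W
  set YD : Set Y := ⋂ p : (hD.toFinset ×ˢ hD.toFinset : Finset (G × G)),
    {y : Y | (p : G × G).1 ∈ D → (p : G × G).2 ∈ D → (p : G × G).1 ≠ (p : G × G).2 →
      (p : G × G).1 • y ≠ (p : G × G).2 • y} with hYDdef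
  have hYDdense : Dense YD :=
    dense_iInter_of_isOpen (fun p => (hfreeDense _).2) (fun p => (hfreeDense _).1)
  have hYDopen : IsOpen YD := isOpen_iInter_of_finite (fun p => (hfreeDense _).2)
  have hYDfree : ∀ y ∈ YD, ∀ d ∈ D, ∀ d' ∈ D, d ≠ d' → d • y ≠ d' • y := by
    intro y hy d hd d' hd' hne
    have hmem : ((d, d') : G × G) ∈ (hD.toFinset ×ˢ hD.toFinset : Finset (G × G)) := by
      rw [Finset.mem_product]
      exact ⟨hD.mem_toFinset.2 hd, hD.mem_toFinset.2 hd'⟩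
    exact (mem_iInter.1 hy ⟨(d, d'), hmem⟩) hd hd' hne
  obtain ⟨y₁, hy₁YD, hy₁int⟩ := hYDdense.exists_mem_open (isOpen_interior (s := C)) hCint
  have hstar : ∃ yst ∈ Prod.snd '' (OU ∩ Z), yst ∈ YD := by
    have h1 : y₁ ∈ closure (Prod.snd '' (OU ∩ Z)) := interior_subset hy₁int
    obtain ⟨yst, hyst1, hyst2⟩ := mem_closure_iff.1 h1 YD hYDopen hy₁YD
    exact ⟨yst, hyst2, hyst1⟩
  obtain ⟨yst, hystW, hystYD⟩ := hstar
  -- the open set V around y⋆ with pairwise separated D-translates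
  have hVp : ∀ p : G × G, ∃ Vp : Set Y, IsOpen Vp ∧ yst ∈ Vp ∧
      (p.1 ∈ D → p.2 ∈ D → p.1 ≠ p.2 → ∀ v ∈ Vp, ∀ v' ∈ Vp, p.1 • v ≠ p.2 • v') := by
    intro p
    by_cases hp : p.1 ∈ D ∧ p.2 ∈ D ∧ p.1 ≠ p.2
    · obtain ⟨h1, h2, hne⟩ := hp
      have hb : (p.1⁻¹ * p.2) • yst ≠ yst := by
        intro h
        apply hYDfree yst hystYD p.1 h1 p.2 h2 hne
        rw [mul_smul] at h
        calc p.1 • yst = p.1 • p.1⁻¹ • p.2 • yst := by rw [h]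
          _ = p.2 • yst := by rw [smul_inv_smul]
      obtain ⟨A, B, hA, hB, hmemA, hmemB, hAB⟩ := t2_separation hb
      refine ⟨B ∩ (fun y => (p.1⁻¹ * p.2) • y) ⁻¹' A,
        hB.inter (hA.preimage (continuous_const_smul _)), ⟨hmemB, hmemA⟩, ?_⟩
      intro _ _ _ v hv v' hv' heq
      have h1' : (p.1⁻¹ * p.2) • v' ∈ A := hv'.2
      have h2' : v ∈ B := hv.1
      have hveq : v = (p.1⁻¹ * p.2) • v' := by
        rw [mul_smul, ← heq, inv_smul_smul]
      rw [hveq] at h2'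
      exact (hAB.le_bot ⟨h1', h2'⟩).elim
    · refine ⟨univ, isOpen_univ, mem_univ _, ?_⟩
      intro h1 h2 hne
      exact absurd ⟨h1, h2, hne⟩ hp
  choose Vf hVfopen hVfmem hVfsep using hVp
  set V : Set Y := ⋂ p ∈ D ×ˢ D, Vf p with hVdef
  have hVopen : IsOpen V := (hD.prod hD).isOpen_biInter (fun p _ => hVfopen p)
  have hVmem : yst ∈ V := mem_iInter₂.2 fun p _ => hVfmem p
  have hVsep : ∀ d ∈ D, ∀ d' ∈ D, d ≠ d' → ∀ v ∈ V, ∀ v' ∈ V, d • v ≠ d' • v' := by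
    intro d hd d' hd' hne v hv v' hv'
    have hsub : V ⊆ Vf (d, d') := biInter_subset_of_mem (mk_mem_prod hd hd')
    exact hVfsep (d, d') hd hd' hne v (hsub hv) v' (hsub hv')
  -- the refined open set and its finite returning cover
  set O2 : Set (X × Y) := OU ∩ (Prod.snd ⁻¹' V) with hO2def
  have hO2open : IsOpen O2 := hOUopen.inter (hVopen.preimage continuous_snd)
  have hO2ne : (O2 ∩ Z).Nonempty := by
    obtain ⟨z, ⟨hz1, hz2⟩, hz3⟩ := hystW
    exact ⟨z, ⟨⟨hz1, show z.2 ∈ V by rw [hz3]; exact hVmem⟩, hz2⟩⟩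
  obtain ⟨F', hF'⟩ := minimal_finite_cover' hZcl hZorb hO2open hO2ne
  -- a point avoiding the frontiers of all f⁻¹V, f ∈ F'
  set Ofun : G → Set Y := fun f => (fun y => f • y) ⁻¹' V with hOfundef
  have hOfopen : ∀ f : G, IsOpen (Ofun f) := fun f => hVopen.preimage (continuous_const_smul f)
  have hfrdense : Dense (⋂ f : F', (frontier (Ofun (f : G)))ᶜ) := by
    apply dense_iInter_of_isOpen
    · exact fun f => isClosed_frontier.isOpen_compl
    · intro f
      rw [← interior_eq_empty_iff_dense_compl, ← frontier_compl]
      exact interior_frontier (hOfopen (f : G)).isClosed_compl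
  obtain ⟨y₂, hy₂⟩ := hfrdense.nonempty
  have hy₂fr : ∀ f ∈ F', y₂ ∉ frontier (Ofun f) := by
    intro f hf
    exact mem_iInter.1 hy₂ ⟨f, hf⟩
  -- the decided open set V₂
  have hdich : ∀ f : G, ∃ Wf : Set Y, IsOpen Wf ∧ y₂ ∈ Wf ∧
      (f ∈ F' → (Wf ⊆ Ofun f ∨ Wf ∩ Ofun f = ∅)) := by
    intro f
    by_cases hfF : f ∈ F'
    · by_cases hy : y₂ ∈ Ofun f
      · exact ⟨Ofun f, hOfopen f, hy, fun _ => Or.inl Subset.rfl⟩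
      · have hncl : y₂ ∉ closure (Ofun f) := by
          intro hc
          exact hy₂fr f hfF ⟨hc, by rwa [(hOfopen f).interior_eq]⟩
        refine ⟨(closure (Ofun f))ᶜ, isClosed_closure.isOpen_compl, hncl, fun _ => Or.inr ?_⟩
        apply eq_empty_of_forall_notMem
        rintro w ⟨hw1, hw2⟩
        exact hw1 (subset_closure hw2)
    · exact ⟨univ, isOpen_univ, mem_univ _, fun h => absurd h hfF⟩
  choose Wfun hWopen hWmem hWdich using hdich
  set V₂ : Set Y := ⋂ f ∈ (F' : Finset G), Wfun f with hV₂def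
  have hV₂open : IsOpen V₂ := isOpen_biInter_finset (fun f _ => hWopen f)
  have hV₂mem : y₂ ∈ V₂ := mem_iInter₂.2 fun f _ => hWmem f
  have hV₂dich : ∀ f ∈ F', (V₂ ∩ Ofun f).Nonempty → V₂ ⊆ Ofun f := by
    intro f hf hne
    rcases hWdich f hf with hsub | hdisj
    · intro v hv
      exact hsub (mem_iInter₂.1 hv f hf)
    · obtain ⟨w, hw1, hw2⟩ := hne
      have : w ∈ Wfun f ∩ Ofun f := ⟨mem_iInter₂.1 hw1 f hf, hw2⟩
      rw [hdisj] at this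
      exact absurd this (notMem_empty w)
  -- apply the SCP of Y
  obtain ⟨T, hTsep, hTcov⟩ := hYscp (D * (F' : Set G)) (hD.mul F'.finite_toSet) V₂ hV₂open ⟨y₂, hV₂mem⟩
  set E : Set G := {f : G | f ∈ F' ∧ V₂ ⊆ Ofun f} with hEdef
  refine ⟨E * T, ?_, ?_⟩
  · -- separation
    intro g hg h hh hgh
    rw [Set.mem_mul] at hg hh
    obtain ⟨f₁, hf₁, t₁, ht₁, hg'⟩ := hg
    obtain ⟨f₂, hf₂, t₂, ht₂, hh'⟩ := hh
    rw [Set.disjoint_left]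
    rintro a ha hb
    rw [Set.mem_mul] at ha hb
    obtain ⟨d₁, hd₁, b₁, hb₁, ha'⟩ := ha
    obtain ⟨d₂, hd₂, b₂, hb₂, hb'⟩ := hb
    rw [mem_singleton_iff] at hb₁ hb₂
    subst hb₁ hb₂
    rw [← hg'] at ha'
    rw [← hh'] at hb'
    rcases eq_or_ne t₁ t₂ with rfl | htne
    · -- same t: use the V-separation at the point y₂
      have hdf : d₁ * f₁ = d₂ * f₂ := by
        have : d₁ * (f₁ * t₁) = d₂ * (f₂ * t₁) := by rw [ha', hb']
        rw [← mul_assoc, ← mul_assoc] at this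
        exact mul_right_cancel this
      rcases eq_or_ne d₁ d₂ with rfl | hdne
      · have hf : f₁ = f₂ := mul_left_cancel hdf
        exact hgh (by rw [← hg', ← hh', hf])
      · have h1 : f₁ • y₂ ∈ V := hf₁.2 hV₂mem
        have h2 : f₂ • y₂ ∈ V := hf₂.2 hV₂mem
        apply hVsep d₁ hd₁ d₂ hd₂ hdne (f₁ • y₂) h1 (f₂ • y₂) h2
        rw [← mul_smul, ← mul_smul, hdf]
    · -- different t: use the (D * F')-separation of T
      have hdisj := hTsep t₁ ht₁ t₂ ht₂ htne
      rw [Set.disjoint_left] at hdisj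
      apply hdisj (a := a)
      · rw [← ha', ← mul_assoc]
        exact Set.mul_mem_mul (Set.mul_mem_mul hd₁ hf₁.1) (mem_singleton t₁)
      · rw [← hb', ← mul_assoc]
        exact Set.mul_mem_mul (Set.mul_mem_mul hd₂ hf₂.1) (mem_singleton t₂)
  · -- covering
    intro x
    obtain ⟨z, hzZ, hz1⟩ := hXproj x
    obtain ⟨t, htT, htV₂⟩ := hTcov z.2
    have htzZ : t • z ∈ Z := hZinv t z hzZ
    obtain ⟨f, hfF', hfO2⟩ := hF' (t • z) htzZ
    have hsnd : f • (t • z).2 ∈ V := hfO2.2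
    have hOf : (t • z).2 ∈ Ofun f := hsnd
    have htz2 : (t • z).2 = t • z.2 := rfl
    have hfE : f ∈ E := by
      refine ⟨hfF', hV₂dich f hfF' ⟨t • z.2, ?_, ?_⟩⟩
      · exact htV₂
      · rw [← htz2]; exact hOf
    refine ⟨f * t, Set.mul_mem_mul hfE htT, ?_⟩
    have hfst : (f • (t • z)).1 ∈ U := hfO2.1
    have : (f • (t • z)).1 = (f * t) • x := by
      rw [Prod.smul_fst, Prod.smul_fst, ← mul_smul, hz1]
    rwa [this] at hfst
end

section
/- Let G be an infinite discrete group and let X be a minimal G-flow. Suppose there exists an infinite subgroup H ≤ G such that the restricted action of H on X is equicontinuous. Then X has the separated covering property. -/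
/-!
Let `y` be a cluster point of an orbit `H • x₀` and, by minimality, `g • y ∈ U`. For an open
`N ∋ y` with `closure N ⊆ g⁻¹ • U`, equicontinuity of `H` gives an open `W ∋ x₀` with
`h • W ⊆ g⁻¹ • U` whenever `h ∈ H` and `h • x₀ ∈ N`, which holds for infinitely many `h`; so
`R • W ⊆ U` for an infinite `R ⊆ G`. Finitely many translates `f⁻¹ • W`, `f ∈ F`, cover `X`, and
since every `R * f` is infinite, one element of each can be picked greedily, avoiding the finitely
many elements that are not `D`-separated from those already chosen.
-/

open Pointwise

open Pointwise Filter Topology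

theorem Set.Infinite.exists_forall_mem_nhds_inter_preimage_infinite {α X : Type*}
    [TopologicalSpace X] [CompactSpace X] {s : Set α} (hs : s.Infinite) (f : α → X) :
    ∃ y : X, ∀ N ∈ 𝓝 y, (s ∩ f ⁻¹' N).Infinite := by
  have := hs.cofinite_inf_principal_neBot
  obtain ⟨y, hy⟩ := exists_clusterPt_of_compactSpace (map f (cofinite ⊓ 𝓟 s))
  refine ⟨y, fun N hN => ?_⟩
  have hfreq := mapClusterPt_iff_frequently.1 hy N hN
  rwa [frequently_inf_principal, frequently_cofinite_iff_infinite] at hfreq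

section Separation

variable {G : Type*} [Group G]

theorem DSeparated.insert {D S : Set G} {s : G} (hS : DSeparated G D S)
    (hs : ∀ t ∈ S, s ≠ t → Disjoint (D * {s}) (D * {t})) : DSeparated G D (insert s S) := by
  rintro a (rfl | ha) b (rfl | hb) hab
  · exact absurd rfl hab
  · exact hs b hb hab
  · exact (hs a ha (Ne.symm hab)).symm
  · exact hS a ha b hb hab

theorem disjoint_mul_singleton_of_notMem {D T : Set G} {s t : G} (ht : t ∈ T)
    (hs : s ∉ D⁻¹ * D * T) : Disjoint (D * {s}) (D * {t}) := by
  rw [Set.mul_singleton, Set.mul_singleton, Set.disjoint_left]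
  rintro _ ⟨d, hd, rfl⟩ ⟨d', hd', hdd'⟩
  exact hs ⟨d⁻¹ * d', ⟨d⁻¹, Set.inv_mem_inv.2 hd, d', hd', rfl⟩, t, ht, by
    dsimp only at hdd' ⊢
    rw [mul_assoc, hdd', inv_mul_cancel_left]⟩

theorem exists_dSeparated_forall_exists_mem {ι : Type*} {D : Set G} (hD : D.Finite)
    (F : Finset ι) (A : ι → Set G) (hA : ∀ i ∈ F, (A i).Infinite) :
    ∃ S : Finset G, DSeparated G D S ∧ ∀ i ∈ F, ∃ s ∈ S, s ∈ A i := by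
  classical
  induction F using Finset.induction_on with
  | empty => exact ⟨∅, by simp [DSeparated], by simp⟩
  | insert a F _ ih =>
    obtain ⟨S, hS, hSA⟩ := ih fun i hi => hA i (Finset.mem_insert_of_mem hi)
    obtain ⟨s, hsA, hsS⟩ := ((hA a (Finset.mem_insert_self a F)).sdiff
      ((hD.inv.mul hD).mul S.finite_toSet)).nonempty
    refine ⟨insert s S, ?_, fun i hi => ?_⟩
    · rw [Finset.coe_insert]
      exact hS.insert fun t ht _ => disjoint_mul_singleton_of_notMem ht hsS
    · rcases Finset.mem_insert.1 hi with rfl | hi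
      · exact ⟨s, Finset.mem_insert_self s S, hsA⟩
      · obtain ⟨t, ht, htA⟩ := hSA i hi
        exact ⟨t, Finset.mem_insert_of_mem ht, htA⟩

end Separation

def SMulEquicontinuousOn {G : Type*} (H : Set G) (X : Type*) [TopologicalSpace X] [SMul G X] :
    Prop :=
  ∀ U : Set (X × X), IsOpen U → (∀ x : X, (x, x) ∈ U) →
    ∃ V : Set (X × X), IsOpen V ∧ (∀ x : X, (x, x) ∈ V) ∧
      ∀ p ∈ V, ∀ h ∈ H, ((h • p.1, h • p.2) ∈ U)

section Flows

variable {G X : Type*} [TopologicalSpace X]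

theorem SMulEquicontinuousOn.exists_isOpen_forall_smul_mem [SMul G X] {H : Set G}
    (hH : SMulEquicontinuousOn H X) {N U : Set X} (hU : IsOpen U) (hNU : closure N ⊆ U)
    (x : X) : ∃ W : Set X, IsOpen W ∧ x ∈ W ∧ ∀ h ∈ H, h • x ∈ N → ∀ w ∈ W, h • w ∈ U := by
  obtain ⟨V, hV, hVdiag, hVU⟩ := hH (closure N ×ˢ Uᶜ)ᶜ
    (isClosed_closure.prod hU.isClosed_compl).isOpen_compl fun y hy => hy.2 (hNU hy.1)
  refine ⟨{w | (x, w) ∈ V}, hV.preimage (Continuous.prodMk_right x), hVdiag x,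
    fun h hh hhx w hw => ?_⟩
  by_contra hhw
  exact hVU (x, w) hw h hh ⟨subset_closure hhx, hhw⟩

variable [Group G] [MulAction G X] [CompactSpace X] [ContinuousConstSMul G X]

theorem IsMinimalFlow.exists_finset_forall_smul_mem_s11 (hX : IsMinimalFlow G X) {W : Set X}
    (hW : IsOpen W) (hWne : W.Nonempty) : ∃ F : Finset G, ∀ x : X, ∃ f ∈ F, f • x ∈ W := by
  obtain ⟨F, hF⟩ := isCompact_univ.elim_finite_subcover (fun f : G => (f • ·) ⁻¹' W)
    (fun f => hW.preimage (continuous_const_smul f)) fun x _ => by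
      obtain ⟨_, ⟨f, rfl⟩, hfx⟩ := (hX x).exists_mem_open hW hWne
      exact Set.mem_iUnion.2 ⟨f, hfx⟩
  exact ⟨F, fun x => by simpa using hF (Set.mem_univ x)⟩

theorem IsMinimalFlow.SCP_of_forall_exists_infinite_smul_subset (hX : IsMinimalFlow G X)
    (hU : ∀ U : Set X, IsOpen U → U.Nonempty → ∃ W : Set X, IsOpen W ∧ W.Nonempty ∧
      ∃ R : Set G, R.Infinite ∧ ∀ r ∈ R, ∀ w ∈ W, r • w ∈ U) :
    SCP G X := by
  intro D hD U hUo hUne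
  obtain ⟨W, hW, hWne, R, hR, hRW⟩ := hU U hUo hUne
  obtain ⟨F, hF⟩ := hX.exists_finset_forall_smul_mem_s11 hW hWne
  obtain ⟨S, hS, hSR⟩ := exists_dSeparated_forall_exists_mem hD F (fun f => (· * f) '' R)
    fun f _ => hR.image (mul_left_injective f).injOn
  refine ⟨S, hS, fun x => ?_⟩
  obtain ⟨f, hf, hfx⟩ := hF x
  obtain ⟨_, hs, r, hr, rfl⟩ := hSR f hf
  exact ⟨r * f, hs, by rw [mul_smul]; exact hRW r hr _ hfx⟩

theorem IsMinimalFlow.exists_infinite_smul_subset_of_equicontinuousOn [RegularSpace X]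
    (hX : IsMinimalFlow G X) {H : Set G} (hHinf : H.Infinite) (hH : SMulEquicontinuousOn H X)
    {U : Set X} (hU : IsOpen U) (hUne : U.Nonempty) :
    ∃ W : Set X, IsOpen W ∧ W.Nonempty ∧
      ∃ R : Set G, R.Infinite ∧ ∀ r ∈ R, ∀ w ∈ W, r • w ∈ U := by
  obtain ⟨x₀, -⟩ := id hUne
  obtain ⟨y, hy⟩ := hHinf.exists_forall_mem_nhds_inter_preimage_infinite (fun h : G => h • x₀)
  obtain ⟨_, ⟨g, rfl⟩, hgy⟩ := (hX y).exists_mem_open hU hUne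
  obtain ⟨N, ⟨hyN, hN⟩, hNU⟩ := (hasBasis_opens_closure y).mem_iff.1
    ((hU.preimage (continuous_const_smul g)).mem_nhds hgy)
  obtain ⟨W, hW, hx₀W, hWU⟩ := hH.exists_isOpen_forall_smul_mem
    (hU.preimage (continuous_const_smul g)) hNU x₀
  refine ⟨W, hW, ⟨x₀, hx₀W⟩, (g * ·) '' (H ∩ (fun h : G => h • x₀) ⁻¹' N),
    (hy N (hN.mem_nhds hyN)).image (mul_right_injective g).injOn, ?_⟩
  rintro _ ⟨h, ⟨hhH, hhx₀⟩, rfl⟩ w hw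
  rw [mul_smul]
  exact hWU h hhH hhx₀ w hw

end Flows

theorem SCP_of_equicontinuous_infinite_subgroup_general
    (G : Type*) [Group G]
    (X : Type*) [TopologicalSpace X] [CompactSpace X] [T2Space X]
    [MulAction G X] [ContinuousConstSMul G X]
    (hXmin : IsMinimalFlow G X)
    (H : Subgroup G) (hHinf : (H : Set G).Infinite)
    (hequi : ∀ U : Set (X × X), IsOpen U → (∀ x : X, (x, x) ∈ U) →
      ∃ V : Set (X × X), IsOpen V ∧ (∀ x : X, (x, x) ∈ V) ∧
        ∀ p ∈ V, ∀ h ∈ H, ((h • p.1, h • p.2) ∈ U)) :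
    SCP G X :=
  IsMinimalFlow.SCP_of_forall_exists_infinite_smul_subset hXmin fun _ hU hUne =>
    IsMinimalFlow.exists_infinite_smul_subset_of_equicontinuousOn hXmin hHinf hequi hU hUne

/-- Let `X` be a minimal `G`-flow and suppose there is an infinite
subgroup `H ≤ G` whose restricted action on `X` is equicontinuous (in the topological
sense: for every open `U ⊆ X × X` containing the diagonal there is an open `V ⊆ X × X`
containing the diagonal such that `(x, y) ∈ V` implies `(h•x, h•y) ∈ U` for all `h ∈ H`).
Then `X` has the separated covering property. -/
theorem SCP_of_equicontinuous_infinite_subgroup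
    (G : Type*) [Group G] [Infinite G]
    (X : Type*) [TopologicalSpace X] [CompactSpace X] [T2Space X] [Nonempty X]
    [MulAction G X] [ContinuousConstSMul G X]
    (hXmin : IsMinimalFlow G X)
    (H : Subgroup G) (hHinf : (H : Set G).Infinite)
    (hequi : ∀ U : Set (X × X), IsOpen U → (∀ x : X, (x, x) ∈ U) →
      ∃ V : Set (X × X), IsOpen V ∧ (∀ x : X, (x, x) ∈ V) ∧
        ∀ p ∈ V, ∀ h ∈ H, ((h • p.1, h • p.2) ∈ U)) :
    SCP G X :=
  SCP_of_equicontinuous_infinite_subgroup_general G X hXmin H hHinf hequi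
end

section
/- Let G be an infinite discrete group and let A be a finite set with at least two elements. Then the minimal points are dense in the Bernoulli flow A^G: every nonempty open subset of A^G contains a point whose orbit closure is a minimal G-flow. -/
open Pointwise

section Proof

variable {G : Type*} [Group G] {A : Type*} [TopologicalSpace A] [DiscreteTopology A]

omit [TopologicalSpace A] [DiscreteTopology A] in
private lemma shift_apply (g : G) (z : G → A) (h : G) : (g • z) h = z (h * g) := rfl

omit [DiscreteTopology A] in
private lemma continuous_shift (g : G) : Continuous (fun z : G → A => g • z) :=
  continuous_pi fun h => continuous_apply (h * g)

end Proof

/-- Let `G` be an infinite discrete group and `A` a finite (discrete)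
alphabet with at least two elements.  Then the minimal points are dense in the Bernoulli
flow `A^G`: every nonempty open set contains a point whose orbit closure is a minimal
flow. -/
theorem minimal_points_dense_in_bernoulli
    (G : Type*) [Group G] [Infinite G]
    (A : Type*) [TopologicalSpace A] [DiscreteTopology A] [Finite A] [Nontrivial A] :
    ∀ U : Set (G → A), IsOpen U → U.Nonempty →
      ∃ z ∈ U, ∀ w ∈ closure (MulAction.orbit G z),
        closure (MulAction.orbit G w) = closure (MulAction.orbit G z) := by
  intro U hU hUne
  obtain ⟨x, hxU⟩ := hUne
  obtain ⟨I, u, hu, hsub⟩ := isOpen_pi_iff.mp hU x hxU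
  -- the pattern set
  set F : Set G := insert 1 (↑I) with hF
  have hFfin : F.Finite := (I.finite_toSet).insert 1
  have h1F : (1 : G) ∈ F := Set.mem_insert _ _
  -- the syndeticity constant set
  set K : Set G := F⁻¹ * F with hK
  have hKfin : K.Finite := hFfin.inv.mul hFfin
  have h1K : (1 : G) ∈ K := by
    rw [hK]
    exact ⟨1, by simpa using h1F, 1, h1F, by simp⟩
  -- the subshift of points where the pattern occurs K-syndetically
  set Y : Set (G → A) :=
    {z | ∀ g : G, ∃ s ∈ K, ∀ f ∈ F, z (f * (s * g)) = x f} with hY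
  have hYclosed : IsClosed Y := by
    have : Y = ⋂ g : G, ⋃ s ∈ K, ⋂ f ∈ F, {z : G → A | z (f * (s * g)) = x f} := by
      ext z; simp [hY]
    rw [this]
    refine isClosed_iInter fun g => hKfin.isClosed_biUnion fun s _ => ?_
    exact isClosed_biInter fun f _ => isClosed_eq (continuous_apply _) continuous_const
  have hYinv : ∀ (g : G), ∀ z ∈ Y, g • z ∈ Y := by
    intro g z hz g'
    obtain ⟨s, hs, hocc⟩ := hz (g' * g)
    refine ⟨s, hs, fun f hf => ?_⟩
    rw [shift_apply]
    have : f * (s * g') * g = f * (s * (g' * g)) := by group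
    rw [this]; exact hocc f hf
  -- construct a point of Y via a maximal separated set
  have hYne : Y.Nonempty := by
    obtain ⟨S, hSmax⟩ : ∃ S, Maximal
        (· ∈ {S : Set G | ∀ s ∈ S, ∀ t ∈ S, ∀ f ∈ F, ∀ f' ∈ F, f * s = f' * t → s = t}) S := by
      apply zorn_subset
      intro c hc hchain
      refine ⟨⋃₀ c, ?_, fun s hs => Set.subset_sUnion_of_mem hs⟩
      intro s hs t ht f hf f' hf' heq
      obtain ⟨cs, hcs, hscs⟩ := hs
      obtain ⟨ct, hct, htct⟩ := ht
      rcases hchain.total hcs hct with h | h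
      · exact hc hct s (h hscs) t htct f hf f' hf' heq
      · exact hc hcs s hscs t (h htct) f hf f' hf' heq
    have hSsep : ∀ s ∈ S, ∀ t ∈ S, ∀ f ∈ F, ∀ f' ∈ F, f * s = f' * t → s = t := hSmax.1
    -- S is K-syndetic
    have hsynd : ∀ g : G, ∃ s ∈ S, ∃ k ∈ K, s = k * g := by
      intro g
      by_cases hgS : g ∈ S
      · exact ⟨g, hgS, 1, h1K, by simp⟩
      · have hnot : ¬ ∀ s ∈ insert g S, ∀ t ∈ insert g S,
            ∀ f ∈ F, ∀ f' ∈ F, f * s = f' * t → s = t := by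
          intro hins
          exact hgS (hSmax.2 (y := insert g S)
            (by exact hins) (Set.subset_insert _ _) (Set.mem_insert _ _))
        push_neg at hnot
        obtain ⟨s, hs, t, ht, f, hf, f', hf', heq, hne⟩ := hnot
        rcases Set.mem_insert_iff.mp hs with hsg | hsS
        · rcases Set.mem_insert_iff.mp ht with htg | htS
          · exact absurd (hsg.trans htg.symm) hne
          · refine ⟨t, htS, f'⁻¹ * f, ⟨f'⁻¹, by simpa using hf', f, hf, rfl⟩, ?_⟩
            have h2 : f' * t = f * g := by rw [← heq, hsg]
            calc t = f'⁻¹ * (f' * t) := by group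
            _ = f'⁻¹ * (f * g) := by rw [h2]
            _ = f'⁻¹ * f * g := by group
        · rcases Set.mem_insert_iff.mp ht with htg | htS
          · refine ⟨s, hsS, f⁻¹ * f', ⟨f⁻¹, by simpa using hf, f', hf', rfl⟩, ?_⟩
            have h2 : f * s = f' * g := by rw [heq, htg]
            calc s = f⁻¹ * (f * s) := by group
            _ = f⁻¹ * (f' * g) := by rw [h2]
            _ = f⁻¹ * f' * g := by group
          · exact absurd (hSsep s hsS t htS f hf f' hf' heq) hne
    classical
    -- the point with pattern x|F planted at every s ∈ S
    refine ⟨fun h => if hc : ∃ s, s ∈ S ∧ h * s⁻¹ ∈ F then x (h * hc.choose⁻¹) else x 1, ?_⟩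
    have hocc : ∀ s ∈ S, ∀ f ∈ F,
        (fun h => if hc : ∃ s, s ∈ S ∧ h * s⁻¹ ∈ F then x (h * hc.choose⁻¹) else x 1) (f * s)
          = x f := by
      intro s hsS f hf
      have hc : ∃ s', s' ∈ S ∧ (f * s) * s'⁻¹ ∈ F := ⟨s, hsS, by simpa using hf⟩
      simp only [dif_pos hc]
      set s' := hc.choose with hs'
      obtain ⟨hs'S, hs'F⟩ := hc.choose_spec
      have hss' : s = s' := by
        refine hSsep s hsS s' hs'S f hf (f * s * s'⁻¹) hs'F ?_
        group
      rw [← hss']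
      congr 1
      group
    intro g
    obtain ⟨s, hsS, k, hkK, hsk⟩ := hsynd g
    exact ⟨k, hkK, fun f hf => by rw [← hsk]; exact hocc s hsS f hf⟩
  -- find a minimal subflow of Y via Zorn
  set 𝒮 : Set (Set (G → A)) :=
    {M | M.Nonempty ∧ IsClosed M ∧ (∀ (g : G), ∀ z ∈ M, g • z ∈ M) ∧ M ⊆ Y} with h𝒮
  have hY𝒮 : Y ∈ 𝒮 := ⟨hYne, hYclosed, hYinv, Set.Subset.rfl⟩
  obtain ⟨M, -, hMmin⟩ : ∃ M, M ⊆ Y ∧ Minimal (· ∈ 𝒮) M := by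
    apply zorn_superset_nonempty
    · intro c hc hchain hcne
      refine ⟨⋂₀ c, ⟨?_, ?_, ?_, ?_⟩, fun s hs => Set.sInter_subset_of_mem hs⟩
      · have : Nonempty c := hcne.to_subtype
        have hne : (⋂ s : c, (s : Set (G → A))).Nonempty := by
          apply IsCompact.nonempty_iInter_of_directed_nonempty_isCompact_isClosed
          · intro i j
            rcases hchain.total i.2 j.2 with h | h
            · exact ⟨i, Set.Subset.rfl, h⟩
            · exact ⟨j, h, Set.Subset.rfl⟩
          · exact fun i => (hc i.2).1
          · exact fun i => (hc i.2).2.1.isCompact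
          · exact fun i => (hc i.2).2.1
        rwa [Set.sInter_eq_iInter]
      · exact isClosed_sInter fun s hs => (hc hs).2.1
      · intro g z hz
        exact Set.mem_sInter.mpr fun s hs => (hc hs).2.2.1 g z (Set.mem_sInter.mp hz s hs)
      · obtain ⟨s, hs⟩ := hcne
        exact (Set.sInter_subset_of_mem hs).trans (hc hs).2.2.2
    · exact hY𝒮
  obtain ⟨⟨m, hmM⟩, hMcl, hMinv, hMY⟩ := hMmin.1
  -- every point of M has orbit closure M
  have horb : ∀ w ∈ M, closure (MulAction.orbit G w) = M := by
    intro w hwM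
    have horbM : MulAction.orbit G w ⊆ M := by
      rintro _ ⟨g, rfl⟩; exact hMinv g w hwM
    have hclM : closure (MulAction.orbit G w) ⊆ M := closure_minimal horbM hMcl
    have h𝒮mem : closure (MulAction.orbit G w) ∈ 𝒮 := by
      refine ⟨⟨w, subset_closure ⟨1, one_smul G w⟩⟩, isClosed_closure, ?_, hclM.trans hMY⟩
      intro g z hz
      have h1 : g • z ∈ closure ((fun z => g • z) '' MulAction.orbit G w) :=
        image_closure_subset_closure_image (continuous_shift g) ⟨z, hz, rfl⟩
      refine closure_mono ?_ h1
      rintro _ ⟨_, ⟨h, rfl⟩, rfl⟩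
      refine ⟨g * h, ?_⟩
      show (g * h) • w = g • (h • w)
      rw [mul_smul]
    exact Set.Subset.antisymm hclM (hMmin.2 h𝒮mem hclM)
  -- shift a point of M into the cylinder
  obtain ⟨s, hsK, hocc⟩ := hMY hmM 1
  refine ⟨s • m, ?_, ?_⟩
  · apply hsub
    intro i hi
    have hiF : (i : G) ∈ F := Set.mem_insert_of_mem _ hi
    have : (s • m) i = x i := by
      rw [shift_apply]
      have := hocc i hiF
      rwa [mul_one] at this
    rw [this]
    exact (hu i hi).2
  · have hsmM : s • m ∈ M := hMinv s m hmM
    have hz : closure (MulAction.orbit G (s • m)) = M := horb _ hsmM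
    intro w hw
    rw [hz] at hw
    rw [hz, horb w hw]
end

section
/- Let G be an infinite discrete group, let X be an incontractible G-flow, and let Y be a minimal, proximal G-flow. Then X and Y are disjoint. -/
open Pointwise

/-- A point of a `G`-flow is minimal if its orbit closure is a minimal flow. -/
def IsMinimalPoint (G : Type*) [Group G] {X : Type*} [TopologicalSpace X]
    [MulAction G X] (x : X) : Prop :=
  ∀ y ∈ closure (MulAction.orbit G x),
    closure (MulAction.orbit G y) = closure (MulAction.orbit G x)

/-- A `G`-flow `X` is incontractible if for every `n` the minimal points are dense in
`X^n` (with the diagonal `G`-action). -/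
def Incontractible (G : Type*) [Group G] (X : Type*) [TopologicalSpace X]
    [MulAction G X] : Prop :=
  ∀ n : ℕ, Dense {x : Fin n → X | IsMinimalPoint G x}

/-- A `G`-flow is proximal if any two points can be simultaneously pushed to a single
point: `(y, y)` lies in the closure of `{(g • x₁, g • x₂) : g ∈ G}` for some `y`. -/
def IsProximalFlow (G : Type*) [Group G] (X : Type*) [TopologicalSpace X]
    [MulAction G X] : Prop :=
  ∀ x₁ x₂ : X, ∃ y : X, (y, y) ∈ closure (Set.range fun g : G => (g • x₁, g • x₂))


section UAct

open Filter Topology MulAction Pointwise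

variable {G : Type*} [Group G]
variable {Z : Type*} [TopologicalSpace Z] [MulAction G Z]

noncomputable def uact [CompactSpace Z] (F : Ultrafilter G) (z : Z) : Z :=
  (F.map fun g => g • z).lim

theorem tendsto_uact [CompactSpace Z] (F : Ultrafilter G) (z : Z) :
    Filter.Tendsto (fun g => g • z) (F : Filter G) (nhds (uact F z)) := by
  have := (F.map fun g => g • z).le_nhds_lim
  rwa [Ultrafilter.coe_map] at this

theorem uact_mem_closure_orbit [CompactSpace Z] (F : Ultrafilter G) (z : Z) :
    uact F z ∈ closure (MulAction.orbit G z) :=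
  mem_closure_of_tendsto (tendsto_uact F z)
    (Filter.Eventually.of_forall fun g => MulAction.mem_orbit z g)

theorem uact_eq_of_tendsto [CompactSpace Z] [T2Space Z] {F : Ultrafilter G} {z q : Z}
    (h : Filter.Tendsto (fun g => g • z) (F : Filter G) (nhds q)) : uact F z = q :=
  tendsto_nhds_unique (tendsto_uact F z) h

theorem exists_uact_eq [CompactSpace Z] [T2Space Z] {z q : Z}
    (h : q ∈ closure (Set.range fun g : G => g • z)) : ∃ F : Ultrafilter G, uact F z = q := by
  have hne : Filter.NeBot (Filter.comap (fun g : G => g • z) (nhds q)) := by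
    refine Filter.comap_neBot fun t ht => ?_
    rcases mem_closure_iff_nhds.1 h t ht with ⟨_, hmt, g, rfl⟩
    exact ⟨g, hmt⟩
  refine ⟨Ultrafilter.of (Filter.comap (fun g : G => g • z) (nhds q)), uact_eq_of_tendsto ?_⟩
  calc Filter.map (fun g : G => g • z)
        ↑(Ultrafilter.of (Filter.comap (fun g : G => g • z) (nhds q)))
      ≤ Filter.map (fun g : G => g • z) (Filter.comap (fun g : G => g • z) (nhds q)) :=
        Filter.map_mono (Ultrafilter.of_le _)
    _ ≤ nhds q := Filter.map_comap_le

theorem closure_orbit_subset [ContinuousConstSMul G Z] {z q : Z}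
    (h : q ∈ closure (MulAction.orbit G z)) :
    closure (MulAction.orbit G q) ⊆ closure (MulAction.orbit G z) := by
  refine closure_minimal ?_ isClosed_closure
  rintro _ ⟨g, rfl⟩
  have : g • q ∈ g • closure (MulAction.orbit G z) := Set.smul_mem_smul_set h
  rwa [← closure_smul, MulAction.smul_orbit] at this

theorem uact_prod {W : Type*} [TopologicalSpace W] [CompactSpace W] [T2Space W] [MulAction G W]
    [CompactSpace Z] [T2Space Z] (F : Ultrafilter G) (p : Z × W) :
    uact F p = (uact F p.1, uact F p.2) :=
  uact_eq_of_tendsto ((tendsto_uact F p.1).prodMk_nhds (tendsto_uact F p.2))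

theorem uact_pi {ι : Type*} [CompactSpace Z] [T2Space Z] (F : Ultrafilter G) (p : ι → Z) :
    uact F p = fun i => uact F (p i) :=
  uact_eq_of_tendsto (tendsto_pi_nhds.2 fun i => tendsto_uact F (p i))

noncomputable def applyList [CompactSpace Z] : List (Ultrafilter G) → Z → Z
  | [], z => z
  | F :: Fs, z => uact F (applyList Fs z)

theorem applyList_mem_closure_orbit [CompactSpace Z] [ContinuousConstSMul G Z]
    (Fs : List (Ultrafilter G)) (z : Z) : applyList Fs z ∈ closure (MulAction.orbit G z) := by
  induction Fs with
  | nil => exact subset_closure (MulAction.mem_orbit_self z)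
  | cons F Fs ih =>
    exact closure_orbit_subset ih (uact_mem_closure_orbit F (applyList Fs z))

theorem applyList_prod {W : Type*} [TopologicalSpace W] [CompactSpace W] [T2Space W]
    [MulAction G W] [CompactSpace Z] [T2Space Z] (Fs : List (Ultrafilter G)) (p : Z × W) :
    applyList Fs p = (applyList Fs p.1, applyList Fs p.2) := by
  induction Fs with
  | nil => rfl
  | cons F Fs ih =>
    show uact F (applyList Fs p) = _
    rw [ih, uact_prod]
    rfl

theorem applyList_pi {ι : Type*} [CompactSpace Z] [T2Space Z]
    (Fs : List (Ultrafilter G)) (p : ι → Z) :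
    applyList Fs p = fun i => applyList Fs (p i) := by
  induction Fs with
  | nil => rfl
  | cons F Fs ih =>
    show uact F (applyList Fs p) = _
    rw [ih, uact_pi]
    rfl

end UAct

theorem contract_tuple {G : Type*} [Group G] {Y : Type*} [TopologicalSpace Y]
    [CompactSpace Y] [T2Space Y] [Nonempty Y] [MulAction G Y]
    (hprox : IsProximalFlow G Y) :
    ∀ (n : ℕ) (y : Fin n → Y),
      ∃ (Fs : List (Ultrafilter G)) (z : Y), ∀ i, applyList Fs (y i) = z := by
  intro n
  induction n with
  | zero => exact fun y => ⟨[], Classical.arbitrary Y, fun i => i.elim0⟩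
  | succ n ih =>
    intro y
    obtain ⟨Fs, z, hz⟩ := ih fun i => y i.succ
    set w := applyList Fs (y 0) with hw
    obtain ⟨u, hu⟩ := hprox w z
    have hu' : (u, u) ∈ closure (Set.range fun g : G => g • (w, z)) := hu
    obtain ⟨F, hF⟩ := exists_uact_eq hu'
    rw [uact_prod] at hF
    obtain ⟨h1, h2⟩ := Prod.mk.inj hF
    refine ⟨F :: Fs, u, ?_⟩
    intro i
    refine Fin.cases ?_ ?_ i
    · show uact F (applyList Fs (y 0)) = u
      rw [← hw, h1]
    · intro j
      show uact F (applyList Fs (y j.succ)) = u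
      rw [hz j, h2]

/-- Let `X` be an incontractible `G`-flow and `Y` a minimal, proximal
`G`-flow.  Then `X` and `Y` are disjoint. -/
theorem incontractible_disjoint_from_minimal_proximal
    (G : Type*) [Group G] [Infinite G]
    (X : Type*) [TopologicalSpace X] [CompactSpace X] [T2Space X]
    [MulAction G X] [ContinuousConstSMul G X]
    (Y : Type*) [TopologicalSpace Y] [CompactSpace Y] [T2Space Y] [Nonempty Y]
    [MulAction G Y] [ContinuousConstSMul G Y]
    (hX : Incontractible G X) (hYmin : IsMinimalFlow G Y) (hYprox : IsProximalFlow G Y) :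
    FlowsDisjoint G X Y := by
  classical
  intro J hJclosed hJinv hJX hJY
  have hJorb : ∀ p ∈ J, closure (MulAction.orbit G p) ⊆ J := fun p hp =>
    closure_minimal (by rintro _ ⟨g, rfl⟩; exact hJinv g p hp) hJclosed
  rw [Set.eq_univ_iff_forall]
  rintro ⟨x, y⟩
  rw [← hJclosed.closure_eq, mem_closure_iff]
  intro O hO hxyO
  rcases isOpen_prod_iff.1 hO x y hxyO with ⟨U, V, hU, hV, hxU, hyV, hUVO⟩
  obtain ⟨t, ht⟩ := IsCompact.elim_finite_subcover (isCompact_univ (X := Y))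
      (fun g : G => (fun y' => g • y') ⁻¹' V)
      (fun g => hV.preimage (continuous_const_smul g))
      (fun y' _ => by
        obtain ⟨p, hp, hpV⟩ := (hYmin y').exists_mem_open hV ⟨y, hyV⟩
        obtain ⟨g, rfl⟩ := MulAction.mem_orbit_iff.1 hp
        exact Set.mem_iUnion.2 ⟨g, hpV⟩)
  set n := t.card with hn
  set gf : Fin n → G := fun i => (t.equivFin.symm i : G) with hgf
  have hcov : ∀ y' : Y, ∃ i : Fin n, gf i • y' ∈ V := by
    intro y'
    have h1 := ht (Set.mem_univ y')
    rw [Set.mem_iUnion₂] at h1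
    obtain ⟨g, hg, hgy⟩ := h1
    refine ⟨t.equivFin ⟨g, hg⟩, ?_⟩
    simpa [hgf, Equiv.symm_apply_apply] using hgy
  set W : Set (Fin n → X) := ⋂ i, (fun xx : Fin n → X => gf i • xx i) ⁻¹' U with hWdef
  have hWopen : IsOpen W := isOpen_iInter_of_finite fun i =>
    hU.preimage ((continuous_apply i).const_smul _)
  have hWne : W.Nonempty := ⟨fun i => (gf i)⁻¹ • x, Set.mem_iInter.2 fun i => by
    simp only [Set.mem_preimage, smul_inv_smul]
    exact hxU⟩
  obtain ⟨xt, hxtmin, hxtW⟩ := (hX n).exists_mem_open hWopen hWne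
  have hfull : ∀ x' : X, ∃ y' : Y, (x', y') ∈ J := by
    intro x'
    have hx' : x' ∈ Prod.fst '' J := hJX ▸ Set.mem_univ x'
    obtain ⟨p, hp, hpx⟩ := hx'
    exact ⟨p.2, by rw [← hpx]; exact hp⟩
  choose yv hyv using fun i => hfull (xt i)
  obtain ⟨Fs, z, hz⟩ := contract_tuple hYprox n yv
  have hJ1 : ∀ i, (applyList Fs (xt i), z) ∈ J := by
    intro i
    have hmem : applyList Fs (xt i, yv i) ∈ J :=
      hJorb _ (hyv i) (applyList_mem_closure_orbit Fs (xt i, yv i))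
    rw [show applyList Fs (xt i, yv i)
        = (applyList Fs (xt i), applyList Fs (yv i)) from applyList_prod Fs _] at hmem
    rwa [hz i] at hmem
  have hxt' : applyList Fs xt ∈ closure (MulAction.orbit G xt) :=
    applyList_mem_closure_orbit Fs xt
  have hback : xt ∈ closure (Set.range fun g : G => g • applyList Fs xt) := by
    have heq := hxtmin _ hxt'
    show xt ∈ closure (MulAction.orbit G (applyList Fs xt))
    rw [heq]
    exact subset_closure (MulAction.mem_orbit_self xt)
  obtain ⟨F₂, hF₂⟩ := exists_uact_eq hback
  set ystar := uact F₂ z with hystar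
  have hJ2 : ∀ i, (xt i, ystar) ∈ J := by
    intro i
    have hmem : uact F₂ (applyList Fs (xt i), z) ∈ J :=
      hJorb _ (hJ1 i) (uact_mem_closure_orbit F₂ _)
    rw [show uact F₂ (applyList Fs (xt i), z)
        = (uact F₂ (applyList Fs (xt i)), ystar) from uact_prod F₂ _] at hmem
    have hcomp : uact F₂ (applyList Fs (xt i)) = xt i := by
      have h := congrFun hF₂ i
      rw [show uact F₂ (applyList Fs xt) = fun j => uact F₂ ((applyList Fs xt) j)
          from uact_pi F₂ _] at h
      simpa [show applyList Fs xt = fun j => applyList Fs (xt j) from applyList_pi Fs _]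
        using h
    rwa [hcomp] at hmem
  obtain ⟨i, hi⟩ := hcov ystar
  have hxtU : gf i • xt i ∈ U := Set.mem_iInter.1 hxtW i
  exact ⟨gf i • (xt i, ystar), hUVO (Set.mk_mem_prod hxtU hi), hJinv _ _ (hJ2 i)⟩
end

section
/- Let G be an infinite discrete group. Then the Bernoulli flow 2^G is disjoint from every minimal, proximal G-flow; consequently, every minimal proximal G-flow has the separated covering property. -/
open Pointwise

/-!
In a minimal proximal flow every finite set of points can be moved into any nonempty open set
`U` by a single group element: proximality, iterated through products of ultrafilters on `G`,
collapses the finite set to one point, and minimality moves that point into `U`.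

For finite `D`, colour the graph on `G` joining `g ≠ h` whenever `Dg ∩ Dh ≠ ∅`; its degrees are
bounded by `|D⁻¹D|`, so finitely many colours suffice, and colour classes are `D`-separated. Some
colour class `S` has `S⁻¹U = X`: otherwise pick, for every colour, a point that its class never
moves into `U`, and push all these points into `U` by one `g`, contradicting the colour of `g`.

Given the separated covering property, let `J ⊆ X × 2^G` be closed, invariant, with full
projections, and take a basic neighbourhood `U × {w | w = z on D}` of `(x, z)`. The point `ζ`
that copies `z|D` onto every block `Ds`, `s ∈ S`, has a partner `(x', ζ) ∈ J`; some `s ∈ S`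
moves `x'` into `U`, and then `s • (x', ζ) ∈ J` lies in the neighbourhood.
-/

open Filter Set Topology

theorem SimpleGraph.colorable_of_encard_neighborSet_le {V : Type*} (Γ : SimpleGraph V) {N : ℕ}
    (hN : ∀ v, (Γ.neighborSet v).encard ≤ N) : Γ.Colorable (N + 1) := by
  -- greedy colouring along a well-order: a vertex avoids the colours of its earlier neighbours
  classical
  let r := @WellOrderingRel V
  have step : ∀ v (rec : ∀ w, r w v → Fin (N + 1)), ∃ i, ∀ w (hw : r w v),
      Γ.Adj v w → rec w hw ≠ i := by
    intro v rec
    let f : V → Fin (N + 1) := fun w => if hw : r w v then rec w hw else 0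
    have hlt : (f '' Γ.neighborSet v).encard < (univ : Set (Fin (N + 1))).encard := by
      rw [encard_univ, ENat.card_eq_coe_fintype_card, Fintype.card_fin]
      exact (encard_image_le f _).trans_lt ((hN v).trans_lt (by norm_cast; omega))
    obtain ⟨i, hi⟩ := (ne_univ_iff_exists_notMem (f '' Γ.neighborSet v)).1
      fun h => hlt.ne (by rw [h])
    refine ⟨i, fun w hw hvw hwi => hi ⟨w, hvw, ?_⟩⟩
    simp only [f, dif_pos hw, hwi]
  choose color hcolor using step
  have wf := (WellOrderingRel.isWellOrder (α := V)).wf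
  let c := wf.fix color
  have hc : ∀ v w, r w v → Γ.Adj v w → c w ≠ c v := by
    intro v w hw hvw
    rw [show c v = color v fun w _ => c w from wf.fix_eq color v]
    exact hcolor v (fun w _ => c w) w hw hvw
  refine ⟨SimpleGraph.Coloring.mk c fun {v w} hvw => ?_⟩
  rcases trichotomous_of r v w with hr | rfl | hr
  · exact hc w v hr hvw.symm
  · exact (Γ.irrefl hvw).elim
  · exact (hc v w hr hvw).symm

section Separation

variable {G : Type*} [Group G]

def separationGraph (D : Set G) : SimpleGraph G where
  Adj g h := g ≠ h ∧ ¬Disjoint (D * {g}) (D * {h})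
  symm := ⟨fun _ _ h => ⟨h.1.symm, fun hd => h.2 hd.symm⟩⟩
  loopless := ⟨fun _ h => h.1 rfl⟩

theorem neighborSet_separationGraph_subset (D : Set G) (g : G) :
    (separationGraph D).neighborSet g ⊆ (· * g) '' (D⁻¹ * D) := by
  rintro h ⟨-, hgh⟩
  simp only [mul_singleton, not_disjoint_iff, mem_image] at hgh
  obtain ⟨-, ⟨d, hd, rfl⟩, d', hd', hdd'⟩ := hgh
  exact ⟨d'⁻¹ * d, mul_mem_mul (inv_mem_inv.2 hd') hd, show d'⁻¹ * d * g = h by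
    rw [mul_assoc, ← hdd', inv_mul_cancel_left]⟩

theorem dSeparated_setOf_coloring_eq {α : Type*} {D : Set G}
    (C : (separationGraph D).Coloring α) (i : α) : DSeparated G D {s | C s = i} :=
  fun _ hg _ hh hne => not_not.1 fun hnd =>
    C.valid (show (separationGraph D).Adj _ _ from ⟨hne, hnd⟩) (hg.trans hh.symm)

theorem separationGraph_colorable {D : Set G} (hD : D.Finite) :
    (separationGraph D).Colorable ((D⁻¹ * D).ncard + 1) := by
  refine (separationGraph D).colorable_of_encard_neighborSet_le fun g => ?_
  rw [(hD.inv.mul hD).cast_ncard_eq]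
  exact (encard_le_encard (neighborSet_separationGraph_subset D g)).trans (encard_image_le _ _)

theorem DSeparated.injective_mul {D S : Set G} (hS : DSeparated G D S) :
    Function.Injective fun p : D × S => (p.1 : G) * p.2 := by
  rintro ⟨⟨d, hd⟩, ⟨s, hs⟩⟩ ⟨⟨d', hd'⟩, ⟨s', hs'⟩⟩ h
  have h : d * s = d' * s' := h
  obtain rfl : s = s' := by
    by_contra hne
    exact Set.disjoint_left.1 (hS s hs s' hs' hne) (mul_mem_mul hd rfl) (h ▸ mul_mem_mul hd' rfl)
  obtain rfl : d = d' := mul_right_cancel h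
  rfl

end Separation

section Dynamics

attribute [local instance] Ultrafilter.mul

variable {G : Type*} [Group G] {X : Type*} [TopologicalSpace X] [MulAction G X]

theorem IsProximalFlow.exists_ultrafilter_tendsto_pair (hprox : IsProximalFlow G X) (x₁ x₂ : X) :
    ∃ (q : Ultrafilter G) (z : X),
      Tendsto (· • x₁) (q : Filter G) (𝓝 z) ∧ Tendsto (· • x₂) (q : Filter G) (𝓝 z) := by
  obtain ⟨z, hz⟩ := hprox x₁ x₂
  rw [mem_closure_iff_clusterPt, ← Filter.map_top, ← mapClusterPt_def,
    mapClusterPt_iff_ultrafilter] at hz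
  obtain ⟨q, -, hq⟩ := hz
  rw [nhds_prod_eq, tendsto_prod_iff'] at hq
  exact ⟨q, z, hq⟩

variable [ContinuousConstSMul G X]

theorem tendsto_smul_ultrafilter_mul {p q : Ultrafilter G} {x w z : X}
    (hp : Tendsto (· • x) (p : Filter G) (𝓝 w)) (hq : Tendsto (· • w) (q : Filter G) (𝓝 z)) :
    Tendsto (· • x) ((q * p : Ultrafilter G) : Filter G) (𝓝 z) := fun V hV =>
  (Ultrafilter.eventually_mul q p _).2 <|
    (hq.eventually (eventually_eventually_nhds.2 hV)).mono fun h hh =>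
      ((hp.const_smul h).eventually hh).mono fun g hg => show (h * g) • x ∈ V by rwa [mul_smul]

theorem IsProximalFlow.exists_ultrafilter_tendsto_finset [CompactSpace X] [Nonempty X]
    (hprox : IsProximalFlow G X) (F : Finset X) :
    ∃ (p : Ultrafilter G) (y : X), ∀ x ∈ F, Tendsto (· • x) (p : Filter G) (𝓝 y) := by
  classical
  induction F using Finset.induction_on with
  | empty => exact ⟨pure 1, Classical.arbitrary X, by simp⟩
  | insert x₀ F _ ih =>
    obtain ⟨p, y, hy⟩ := ih
    let y₀ := (p.map (· • x₀)).lim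
    have hy₀ : Tendsto (· • x₀) (p : Filter G) (𝓝 y₀) := (p.map (· • x₀)).le_nhds_lim
    obtain ⟨q, z, hqy, hqy₀⟩ := hprox.exists_ultrafilter_tendsto_pair y y₀
    refine ⟨q * p, z, Finset.forall_mem_insert _ _ _ |>.2 ⟨?_, fun x hx => ?_⟩⟩
    · exact tendsto_smul_ultrafilter_mul hy₀ hqy₀
    · exact tendsto_smul_ultrafilter_mul (hy x hx) hqy

theorem IsMinimalFlow.exists_smul_mem_of_finset [CompactSpace X] (hmin : IsMinimalFlow G X)
    (hprox : IsProximalFlow G X) (F : Finset X) {U : Set X} (hU : IsOpen U) (hUne : U.Nonempty) :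
    ∃ g : G, ∀ x ∈ F, g • x ∈ U := by
  have : Nonempty X := ⟨hUne.some⟩
  obtain ⟨p, y, hy⟩ := hprox.exists_ultrafilter_tendsto_finset F
  obtain ⟨-, ⟨h, rfl⟩, hyU⟩ := (hmin y).exists_mem_open hU hUne
  have : ∀ᶠ g in (p : Filter G), ∀ x ∈ F, h • g • x ∈ U := (eventually_all_finset F).2
    fun x hx => (hy x hx).const_smul h |>.eventually (hU.mem_nhds hyU)
  obtain ⟨g, hg⟩ := this.exists
  exact ⟨h * g, fun x hx => by simpa only [mul_smul] using hg x hx⟩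

theorem IsMinimalFlow.exists_fiber_smul_mem [CompactSpace X] {α : Type*} [Finite α]
    (hmin : IsMinimalFlow G X) (hprox : IsProximalFlow G X) (c : G → α) {U : Set X}
    (hU : IsOpen U) (hUne : U.Nonempty) :
    ∃ i, ∀ x : X, ∃ s, c s = i ∧ s • x ∈ U := by
  classical
  have := Fintype.ofFinite α
  by_contra! h
  choose x hx using h
  obtain ⟨g, hg⟩ := hmin.exists_smul_mem_of_finset hprox (Finset.univ.image x) hU hUne
  exact hx (c g) g rfl (hg _ (Finset.mem_image_of_mem x (Finset.mem_univ _)))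

theorem IsMinimalFlow.scp [CompactSpace X] (hmin : IsMinimalFlow G X)
    (hprox : IsProximalFlow G X) : SCP G X := by
  intro D hD U hU hUne
  obtain ⟨C⟩ := separationGraph_colorable hD
  obtain ⟨i, hi⟩ := hmin.exists_fiber_smul_mem hprox C hU hUne
  exact ⟨{s | C s = i}, dSeparated_setOf_coloring_eq C i, hi⟩

end Dynamics

theorem exists_finset_subset_of_mem_nhds_pi {ι : Type*} {π : ι → Type*}
    [∀ i, TopologicalSpace (π i)] {z : ∀ i, π i} {V : Set (∀ i, π i)} (hV : V ∈ 𝓝 z) :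
    ∃ I : Finset ι, {w | ∀ i ∈ I, w i = z i} ⊆ V := by
  rw [nhds_pi, Filter.mem_pi'] at hV
  obtain ⟨I, t, ht, hIt⟩ := hV
  exact ⟨I, fun w hw => hIt fun i hi => (hw i hi).symm ▸ mem_of_mem_nhds (ht i)⟩

theorem flowsDisjoint_pi_of_scp {G : Type*} [Group G] {X : Type*} [TopologicalSpace X]
    [MulAction G X] {A : Type*} [TopologicalSpace A] [Nonempty A] (hscp : SCP G X) :
    FlowsDisjoint G X (G → A) := by
  intro J hJ hinv _ hsnd
  refine eq_univ_of_forall fun ⟨x, z⟩ => ?_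
  rw [← hJ.closure_eq, mem_closure_iff_nhds]
  intro O hO
  obtain ⟨U, hU, V, hV, hUV⟩ := mem_nhds_prod_iff.1 hO
  obtain ⟨I, hI⟩ := exists_finset_subset_of_mem_nhds_pi hV
  obtain ⟨S, hS, hcover⟩ :=
    hscp I I.finite_toSet (interior U) isOpen_interior ⟨x, mem_interior_iff_mem_nhds.2 hU⟩
  -- the blocks `I * {s}`, `s ∈ S`, are disjoint, so `ζ` can copy `z` onto each of them
  let ζ : G → A := Function.extend (fun p : ↥(I : Set G) × ↥S => (p.1 : G) * p.2)
    (fun p => z p.1) fun _ => Classical.arbitrary A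
  obtain ⟨⟨x', _⟩, hJx', rfl⟩ : ζ ∈ Prod.snd '' J := hsnd ▸ mem_univ ζ
  obtain ⟨s, hs, hsx'⟩ := hcover x'
  refine ⟨s • (x', ζ), hUV ⟨interior_subset hsx', hI fun d hd => ?_⟩, hinv s _ hJx'⟩
  exact show ζ (d * s) = z d from hS.injective_mul.extend_apply _ _ (⟨d, hd⟩, ⟨s, hs⟩)

theorem bernoulli_disjoint_from_minimal_proximal_and_SCP_general
    (G : Type*) [Group G]
    (X : Type*) [TopologicalSpace X] [CompactSpace X]
    [MulAction G X] [ContinuousConstSMul G X]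
    (hXmin : IsMinimalFlow G X) (hXprox : IsProximalFlow G X) :
    FlowsDisjoint G X (G → Bool) ∧ SCP G X :=
  ⟨flowsDisjoint_pi_of_scp (hXmin.scp hXprox), hXmin.scp hXprox⟩

/-- The Bernoulli flow `2^G` is disjoint from every minimal, proximal
`G`-flow; consequently, every minimal proximal `G`-flow has the separated covering
property. -/
theorem bernoulli_disjoint_from_minimal_proximal_and_SCP
    (G : Type*) [Group G] [Infinite G]
    (X : Type*) [TopologicalSpace X] [CompactSpace X] [T2Space X] [Nonempty X]
    [MulAction G X] [ContinuousConstSMul G X]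
    (hXmin : IsMinimalFlow G X) (hXprox : IsProximalFlow G X) :
    FlowsDisjoint G X (G → Bool) ∧ SCP G X :=
  bernoulli_disjoint_from_minimal_proximal_and_SCP_general G X hXmin hXprox
end

section
/- Let G be an infinite discrete group, let X be a minimal G-flow with the separated covering property, and let A be a finite set. Then X is disjoint from every strongly irreducible subshift Y ⊆ A^{ℕ×G}. -/
open Pointwise

/-- The right-shift of `G` on `ℕ × G → A`: `(g • z) (n, h) = z (n, h * g)`. -/
instance (priority := high) shiftSMulNG (A : Type*) (G : Type*) [Group G] :
    SMul G (ℕ × G → A) :=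
  ⟨fun g z p => z (p.1, p.2 * g)⟩

instance shiftMulActionNG (A : Type*) (G : Type*) [Group G] : MulAction G (ℕ × G → A) where
  one_smul z := funext fun p => by show z (p.1, p.2 * 1) = z p; rw [mul_one]
  mul_smul g₁ g₂ z := funext fun p => by
    show z (p.1, p.2 * (g₁ * g₂)) = z (p.1, p.2 * g₁ * g₂)
    rw [mul_assoc]

/-- A subshift `Z ⊆ A^{ℕ×G}` is strongly irreducible if for every `n` there is a finite
`D ⊆ G` such that for all finite `E₁, E₂ ⊆ G` which are `D`-apart and all `z₁, z₂ ∈ Z`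
there is `x ∈ Z` agreeing with `zᵢ` on `{0,…,n−1} × Eᵢ`. -/
def StronglyIrreducibleNG (G : Type*) [Group G] {A : Type*} (Z : Set (ℕ × G → A)) :
    Prop :=
  ∀ n : ℕ, ∃ D : Set G, D.Finite ∧
    ∀ E₁ E₂ : Set G, E₁.Finite → E₂.Finite → Disjoint (D * E₁) (D * E₂) →
      ∀ z₁ ∈ Z, ∀ z₂ ∈ Z, ∃ x ∈ Z,
        (∀ k < n, ∀ g ∈ E₁, x (k, g) = z₁ (k, g)) ∧
        (∀ k < n, ∀ g ∈ E₂, x (k, g) = z₂ (k, g))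

/-- Auxiliary: the key approximation step. -/
lemma scp_key
    (G : Type*) [Group G]
    (A : Type*) [TopologicalSpace A] [DiscreteTopology A] [Finite A]
    (X : Type*) [TopologicalSpace X] [MulAction G X]
    (hXscp : SCP G X)
    (Y : Set (ℕ × G → A)) (hYcl : IsClosed Y) (hYinv : ∀ (g : G), ∀ y ∈ Y, g • y ∈ Y)
    (hYsi : StronglyIrreducibleNG G Y)
    (J : Set (X × (ℕ × G → A))) (hJinv : ∀ (g : G), ∀ p ∈ J, g • p ∈ J)
    (hJ2 : Prod.snd '' J = Y)
    (U : Set X) (hUo : IsOpen U) (hUne : U.Nonempty)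
    (n : ℕ) (E : Set G) (hE : E.Finite)
    (y : ℕ × G → A) (hy : y ∈ Y) :
    ∃ p ∈ J, p.1 ∈ U ∧ ∀ k < n, ∀ e ∈ E, p.2 (k, e) = y (k, e) := by
  classical
  obtain ⟨D, hDfin, hD⟩ := hYsi n
  obtain ⟨S, hSsep, hScov⟩ := hXscp (D * E) (hDfin.mul hE) U hUo hUne
  -- finite combination step
  have claim : ∀ F : Finset G, ↑F ⊆ S →
      ∃ x ∈ Y, ∀ s ∈ F, ∀ k < n, ∀ e ∈ E, x (k, e * s) = y (k, e) := by
    intro F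
    induction F using Finset.induction_on with
    | empty => exact fun _ => ⟨y, hy, by simp⟩
    | @insert s F hsF ih =>
      intro hins
      have hFS : ↑F ⊆ S := by
        intro t ht; exact hins (by simpa using Finset.mem_insert_of_mem ht)
      have hsS : s ∈ S := hins (by simp)
      obtain ⟨x₀, hx₀Y, hx₀⟩ := ih hFS
      have hdisj : Disjoint (D * (E * (F : Set G))) (D * (E * ({s} : Set G))) := by
        rw [Set.disjoint_left]
        rintro a ha1 ha2
        rw [← mul_assoc] at ha1 ha2
        obtain ⟨b, hb, t, ht, rfl⟩ := ha1
        have htS : t ∈ S := hFS ht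
        have hts : t ≠ s := fun h => hsF (h ▸ ht)
        have : b * t ∈ D * E * ({t} : Set G) := ⟨b, hb, t, rfl, rfl⟩
        exact Set.disjoint_left.mp (hSsep t htS s hsS hts) this ha2
      obtain ⟨x, hxY, hx1, hx2⟩ := hD (E * (F : Set G)) (E * ({s} : Set G))
        (hE.mul F.finite_toSet) (hE.mul (Set.finite_singleton s)) hdisj
        x₀ hx₀Y (s⁻¹ • y) (hYinv s⁻¹ y hy)
      refine ⟨x, hxY, ?_⟩
      intro t ht k hk e he
      rcases Finset.mem_insert.mp ht with rfl | htF
      · have hmem : e * t ∈ E * ({t} : Set G) := ⟨e, he, t, rfl, rfl⟩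
        have := hx2 k hk (e * t) hmem
        rw [this]
        show y (k, e * t * t⁻¹) = y (k, e)
        rw [mul_inv_cancel_right]
      · have hmem : e * t ∈ E * (F : Set G) := ⟨e, he, t, htF, rfl⟩
        rw [hx1 k hk (e * t) hmem]
        exact hx₀ t htF k hk e he
  -- compactness: glue over all finite subsets of S
  let ι := {F : Finset G // ↑F ⊆ S}
  let C : ι → Set (ℕ × G → A) := fun F =>
    Y ∩ ⋂ s ∈ F.1, ⋂ k ∈ Finset.range n, ⋂ e ∈ E, {x | x (k, e * s) = y (k, e)}
  have hmemC : ∀ (F : ι) (x : ℕ × G → A), x ∈ C F ↔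
      x ∈ Y ∧ ∀ s ∈ F.1, ∀ k < n, ∀ e ∈ E, x (k, e * s) = y (k, e) := by
    intro F x
    simp [C, Set.mem_iInter]
  have hCclosed : ∀ F : ι, IsClosed (C F) := by
    intro F
    refine hYcl.inter ?_
    refine isClosed_biInter fun s _ => isClosed_biInter fun k _ => isClosed_biInter fun e _ => ?_
    exact isClosed_eq (continuous_apply _) continuous_const
  have hCne : ∀ F : ι, (C F).Nonempty := by
    intro F
    obtain ⟨x, hxY, hx⟩ := claim F.1 F.2
    exact ⟨x, (hmemC F x).mpr ⟨hxY, hx⟩⟩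
  have hdir : Directed (· ⊇ ·) C := by
    intro F₁ F₂
    refine ⟨⟨F₁.1 ∪ F₂.1, by
      push_cast; exact Set.union_subset F₁.2 F₂.2⟩, ?_, ?_⟩ <;>
    · intro x hx
      rw [hmemC] at hx ⊢
      exact ⟨hx.1, fun s hs => hx.2 s (Finset.mem_union.mpr (by tauto))⟩
  have : Nonempty ι := ⟨⟨∅, by simp⟩⟩
  obtain ⟨ytil, hytil⟩ := IsCompact.nonempty_iInter_of_directed_nonempty_isCompact_isClosed
    C hdir hCne (fun F => (hCclosed F).isCompact) hCclosed
  have hytilY : ytil ∈ Y := ((hmemC ⟨∅, by simp⟩ ytil).mp (Set.mem_iInter.mp hytil _)).1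
  have hytilS : ∀ s ∈ S, ∀ k < n, ∀ e ∈ E, ytil (k, e * s) = y (k, e) := by
    intro s hs
    have := (hmemC ⟨{s}, by simpa using hs⟩ ytil).mp (Set.mem_iInter.mp hytil _)
    exact fun k hk e he => this.2 s (Finset.mem_singleton_self s) k hk e he
  -- pick a J-point over ytil and shift it
  have : ytil ∈ Prod.snd '' J := hJ2 ▸ hytilY
  obtain ⟨p, hpJ, hp2⟩ := this
  obtain ⟨s, hsS, hsU⟩ := hScov p.1
  refine ⟨s • p, hJinv s p hpJ, ?_, ?_⟩
  · simpa using hsU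
  · intro k hk e he
    show (s • p.2) (k, e) = y (k, e)
    show p.2 (k, e * s) = y (k, e)
    rw [hp2]
    exact hytilS s hsS k hk e he

/-- Let `X` be a minimal `G`-flow with the separated covering property
and `A` a finite alphabet.  Then `X` is disjoint from every strongly irreducible subshift
`Y ⊆ A^{ℕ×G}`: the only closed `G`-invariant subset of `X × A^{ℕ×G}` projecting onto `X`
and onto `Y` is `X × Y`. -/
theorem SCP_implies_disjoint_from_strongly_irreducible
    (G : Type*) [Group G] [Infinite G]
    (A : Type*) [TopologicalSpace A] [DiscreteTopology A] [Finite A]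
    (X : Type*) [TopologicalSpace X] [CompactSpace X] [T2Space X] [Nonempty X]
    [MulAction G X] [ContinuousConstSMul G X]
    (hXmin : IsMinimalFlow G X) (hXscp : SCP G X)
    (Y : Set (ℕ × G → A)) (hYcl : IsClosed Y) (hYinv : ∀ (g : G), ∀ y ∈ Y, g • y ∈ Y)
    (hYsi : StronglyIrreducibleNG G Y) :
    ∀ J : Set (X × (ℕ × G → A)), IsClosed J → (∀ (g : G), ∀ p ∈ J, g • p ∈ J) →
      Prod.fst '' J = Set.univ → Prod.snd '' J = Y → J = Set.univ ×ˢ Y := by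
  intro J hJcl hJinv hJ1 hJ2
  apply Set.Subset.antisymm
  · intro p hp
    exact ⟨Set.mem_univ _, hJ2 ▸ ⟨p, hp, rfl⟩⟩
  · rintro ⟨x, y⟩ ⟨-, hyY⟩
    rw [← hJcl.closure_eq]
    rw [mem_closure_iff_nhds]
    intro t ht
    rw [mem_nhds_prod_iff] at ht
    obtain ⟨u, hu, v, hv, huv⟩ := ht
    obtain ⟨U, hUu, hUo, hxU⟩ := mem_nhds_iff.mp hu
    -- decode the neighborhood of y in the product space
    rw [nhds_pi, Filter.mem_pi] at hv
    obtain ⟨I, hIfin, t', ht', hIt⟩ := hv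
    have ht'' : ∀ i, y i ∈ t' i := by
      intro i
      have := ht' i
      rwa [nhds_discrete, Filter.mem_pure] at this
    obtain ⟨N, hN⟩ := (hIfin.image Prod.fst).bddAbove
    obtain ⟨p, hpJ, hpU, hp2⟩ := scp_key G A X hXscp Y hYcl hYinv hYsi J hJinv hJ2
      U hUo ⟨x, hxU⟩ (N + 1) (Prod.snd '' I) (hIfin.image _) y hyY
    refine ⟨p, huv ⟨hUu hpU, hIt fun i hi => ?_⟩, hpJ⟩
    have h1 : i.1 < N + 1 := Nat.lt_succ_of_le (hN ⟨i, hi, rfl⟩)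
    have h2 : i.2 ∈ Prod.snd '' I := ⟨i, hi, rfl⟩
    have := hp2 i.1 h1 i.2 h2
    rw [show ((i.1, i.2) : ℕ × G) = i from rfl] at this
    rw [this]
    exact ht'' i
end
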